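/- arXiv:1306.4162 — 7 statements merged into one kernel-verified Lean document; each statement's English description precedes it below -/
import Mathlib

section
/- Let P ≤ S be a fully normalized subgroup. Then there exists a positive integer k not divisible by p such that the number of subgroups of S that are G-conjugate to P equals (|S| / |N_S(P)|) · k. (Specialization to F = F_S(G) of the paper's Lemma: for a fully F-normalized subgroup P of a saturated fusion system F on S, the number of F-conjugates of P equals (|S|/|N_S(P)|)·k with p ∤ k.) -/
/-- Two subgroups of `G` are `G`-conjugate if conjugation by some element of `G`
carries one onto the other. -/
def GConj {G : Type*} [Group G] (P Q : Subgroup G) : Prop :=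
  ∃ g : G, Subgroup.map (MulAut.conj g).toMonoidHom P = Q

/-- The normalizer of `P` taken inside the subgroup `S`, i.e. `N_S(P)`. -/
def normIn {G : Type*} [Group G] (S P : Subgroup G) : Subgroup G :=
  Subgroup.normalizer (P : Set G) ⊓ S

/-- `P ≤ S` is fully normalized if `|N_S(P)| ≥ |N_S(Q)|` for every `Q ≤ S`
that is `G`-conjugate to `P`. -/
def FullyNormalized {G : Type*} [Group G] (S P : Subgroup G) : Prop :=
  ∀ Q : Subgroup G, Q ≤ S → GConj P Q →
    Nat.card ↥(normIn S Q) ≤ Nat.card ↥(normIn S P)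


/-! Count the `g ∈ G` with `g P g⁻¹ ≤ S` in two ways: sorted by the conjugate `g P g⁻¹`
they number `#{Q ≤ S conjugate to P} · |N_G(P)|`, sorted by the Sylow subgroup `g⁻¹ S g ⊇ P`
they number `#{Sylow R ⊇ P} · |N_G(S)|`. The number of Sylow subgroups containing `P` is
`≡ 1 mod p` and `[N_G(S) : S]` is prime to `p`. Full normalization makes `N_S(P)` a Sylow
subgroup of `N_G(P)`: a Sylow subgroup of `N_G(P)` containing `N_S(P)` conjugates into
`N_S(Q)` for some conjugate `Q ≤ S` of `P`, and `|N_S(Q)| ≤ |N_S(P)|`. Hence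
`[N_G(P) : N_S(P)]` is prime to `p`, and comparing `p`-parts gives the claim. -/

open scoped Pointwise
open MulAction Subgroup

namespace MulAction

variable {G α : Type*} [Group G] [MulAction G α]

def smulEqEquivStabilizer {a b : α} {g₀ : G} (h : g₀ • a = b) :
    {g : G // g • a = b} ≃ stabilizer G a where
  toFun g := ⟨g₀⁻¹ * g, by rw [mem_stabilizer_iff, mul_smul, g.2, ← h, inv_smul_smul]⟩
  invFun s := ⟨g₀ * s, by rw [mul_smul, mem_stabilizer_iff.1 s.2, h]⟩
  left_inv g := by simp
  right_inv s := by simp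

theorem card_smul_mem_eq_card_mul_card_stabilizer (a : α) {t : Set α} (ht : t ⊆ orbit G a) :
    Nat.card {g : G // g • a ∈ t} = Nat.card t * Nat.card (stabilizer G a) :=
  calc Nat.card {g : G // g • a ∈ t}
      = Nat.card (Σ b : t, {g : G // g • a = b}) :=
        Nat.card_congr (Equiv.sigmaSubtypeFiberEquivSubtype (· • a) fun _ => Iff.rfl).symm
    _ = Nat.card (t × stabilizer G a) :=
        Nat.card_congr <| (Equiv.sigmaCongrRight fun b =>
          smulEqEquivStabilizer (ht b.2).choose_spec).trans (Equiv.sigmaEquivProd _ _)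
    _ = Nat.card t * Nat.card (stabilizer G a) := Nat.card_prod _ _

end MulAction

theorem Subgroup.card_mul_relIndex {G : Type*} [Group G] {H K : Subgroup G} (h : H ≤ K) :
    Nat.card H * H.relIndex K = Nat.card K := by
  rw [← relIndex_bot_left, ← relIndex_bot_left, relIndex_mul_relIndex _ _ _ bot_le h]

theorem Nat.Prime.exists_not_dvd_and_eq_pow_mul {p e x a c : ℕ} (hp : p.Prime) (ha : ¬ p ∣ a)
    (hc : ¬ p ∣ c) (h : x * a = p ^ e * c) : ∃ k, ¬ p ∣ k ∧ x = p ^ e * k := by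
  obtain ⟨k, rfl⟩ : p ^ e ∣ x :=
    (Nat.Coprime.pow_left e (hp.coprime_iff_not_dvd.2 ha)).dvd_of_dvd_mul_right ⟨c, h⟩
  refine ⟨k, fun hk => hc ?_, rfl⟩
  have hka : k * a = c := Nat.eq_of_mul_eq_mul_left (pow_pos hp.pos e) (by rw [← h, mul_assoc])
  exact hka ▸ dvd_mul_of_dvd_left hk a

section Sylow

variable {p : ℕ} {G : Type*} [Group G]

theorem IsPGroup.card_sylow_containing_modEq_one [Fact p.Prime] [Finite (Sylow p G)]
    {P : Subgroup G} (hP : IsPGroup p P) : Nat.card {R : Sylow p G // P ≤ R} ≡ 1 [MOD p] :=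
  calc Nat.card {R : Sylow p G // P ≤ R}
      = Nat.card (fixedPoints P (Sylow p G)) :=
        Nat.card_congr (Equiv.subtypeEquivRight fun _ => hP.sylow_mem_fixedPoints_iff.symm)
    _ ≡ Nat.card (Sylow p G) [MOD p] := (hP.card_modEq_card_fixedPoints _).symm
    _ ≡ 1 [MOD p] := card_sylow_modEq_one p G

theorem Sylow.not_dvd_relIndex_normalizer [Fact p.Prime] (S : Sylow p G)
    [(S : Subgroup G).FiniteIndex] : ¬ p ∣ (S : Subgroup G).relIndex (normalizer (S : Set G)) :=
  fun h => S.not_dvd_index (h.trans (relIndex_dvd_index_of_le le_normalizer))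

/-- `G` acting on its subgroups by conjugation; `g • P` unfolds to the
`P.map (MulAut.conj g).toMonoidHom` of `GConj`. -/
abbrev Subgroup.conjMulAction (G : Type*) [Group G] : MulAction G (Subgroup G) :=
  MulAction.compHom _ MulAut.conj

attribute [local instance] Subgroup.conjMulAction

theorem Subgroup.stabilizer_conj_eq_normalizer (P : Subgroup G) :
    stabilizer G P = normalizer (P : Set G) := by
  ext g
  exact mem_normalizer_iff_map_conj_eq.symm

theorem card_conj_le_sylow_mul_card_normalizer_eq [Fact p.Prime] [Finite (Sylow p G)]
    (S : Sylow p G) (P : Subgroup G) :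
    Nat.card {Q : Subgroup G // Q ≤ S ∧ GConj P Q} * Nat.card (normalizer (P : Set G)) =
      Nat.card {R : Sylow p G // P ≤ R} * Nat.card (normalizer (S : Set G)) := by
  have hQ := card_smul_mem_eq_card_mul_card_stabilizer (G := G) P
    (t := {Q | Q ≤ S ∧ GConj P Q}) fun _ hQ => hQ.2
  have hR := card_smul_mem_eq_card_mul_card_stabilizer (G := G) S
    (t := {R | P ≤ R}) (by simp)
  rw [stabilizer_conj_eq_normalizer] at hQ
  rw [Sylow.stabilizer_eq_normalizer] at hR
  change _ = Nat.card {Q : Subgroup G // Q ≤ S ∧ GConj P Q} * _ at hQ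
  change _ = Nat.card {R : Sylow p G // P ≤ R} * _ at hR
  rw [← hQ, ← hR]
  refine Nat.card_congr ((Equiv.subtypeEquivRight fun g => and_iff_left ⟨g, rfl⟩).trans
    ((Equiv.inv G).subtypeEquiv fun g => ?_))
  change _ ↔ P ≤ MulAut.conj g⁻¹ • (S : Subgroup G)
  rw [subset_pointwise_smul_iff, ← map_inv, inv_inv]
  rfl

theorem exists_conj_card_le_card_normIn [Fact p.Prime] [Finite G] (S : Sylow p G)
    {P T : Subgroup G} (hT : IsPGroup p T) (hPT : P ≤ T) (hTN : T ≤ normalizer (P : Set G)) :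
    ∃ Q ≤ (S : Subgroup G), GConj P Q ∧ Nat.card T ≤ Nat.card (normIn S Q) := by
  obtain ⟨R, hTR⟩ := hT.exists_le_sylow
  obtain ⟨g, rfl⟩ := exists_smul_eq G R S
  have hgT : g • T ≤ ((g • R : Sylow p G) : Subgroup G) :=
    pointwise_smul_le_pointwise_smul_iff.2 hTR
  refine ⟨g • P, (pointwise_smul_le_pointwise_smul_iff.2 hPT).trans hgT, ⟨g, rfl⟩, ?_⟩
  have hgTN : g • T ≤ normalizer ((g • P : Subgroup G) : Set G) :=
    (pointwise_smul_le_pointwise_smul_iff.2 hTN).trans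
      (map_equiv_normalizer_eq P (MulAut.conj g)).le
  calc Nat.card T = Nat.card ↥(g • T) := Nat.card_congr (equivSMul (MulAut.conj g) T).toEquiv
    _ ≤ Nat.card (normIn (g • R) (g • P)) := card_le_of_le (le_inf hgTN hgT)

theorem FullyNormalized.not_dvd_relIndex_normalizer [Fact p.Prime] [Finite G] {S : Sylow p G}
    {P : Subgroup G} (hP : P ≤ S) (hfn : FullyNormalized S P) :
    ¬ p ∣ (normIn S P).relIndex (normalizer (P : Set G)) := by
  set N := normalizer (P : Set G)
  have hle : normIn S P ≤ N := inf_le_left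
  have hmap : ((normIn S P).subgroupOf N).map N.subtype = normIn S P := by
    rw [subgroupOf_map_subtype, inf_eq_left.2 hle]
  obtain ⟨T, hT⟩ := ((S.isPGroup'.to_le inf_le_right).of_equiv
    (subgroupOfEquivOfLe hle).symm).exists_le_sylow
  obtain ⟨Q, hQS, hPQ, hcard⟩ := exists_conj_card_le_card_normIn S (T.2.map N.subtype)
    ((le_inf le_normalizer hP).trans (hmap.ge.trans (map_mono hT))) (map_subtype_le _)
  have hTeq : (normIn S P).subgroupOf N = T := eq_of_le_of_card_ge hT <|
    calc Nat.card T = Nat.card (T.map N.subtype) :=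
          (card_map_of_injective N.subtype_injective).symm
      _ ≤ Nat.card (normIn S Q) := hcard
      _ ≤ Nat.card (normIn S P) := hfn Q hQS hPQ
      _ = Nat.card ((normIn S P).subgroupOf N) := by
        rw [← card_map_of_injective N.subtype_injective, hmap]
  rw [relIndex, hTeq]
  exact T.not_dvd_index

end Sylow

theorem stmt0 (p : ℕ) [Fact p.Prime] (G : Type*) [Group G] [Fintype G]
    (S : Sylow p G) (P : Subgroup G) (hP : P ≤ ↑S)
    (hfn : FullyNormalized ↑S P) :
    ∃ k : ℕ, 0 < k ∧ ¬ p ∣ k ∧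
      Nat.card {Q : Subgroup G // Q ≤ ↑S ∧ GConj P Q} *
          Nat.card ↥(normIn ↑S P) =
        Nat.card ↥(S : Subgroup G) * k := by
  have hp : p.Prime := Fact.out
  have hsylow : ¬ p ∣ Nat.card {R : Sylow p G // P ≤ R} := fun h =>
    hp.not_dvd_one
      (((S.isPGroup'.to_le hP).card_sylow_containing_modEq_one.dvd_iff dvd_rfl).1 h)
  have hcount : Nat.card {Q : Subgroup G // Q ≤ ↑S ∧ GConj P Q} * Nat.card (normIn S P) *
      (normIn S P).relIndex (normalizer (P : Set G)) =
      Nat.card (S : Subgroup G) * (Nat.card {R : Sylow p G // P ≤ R} *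
        (S : Subgroup G).relIndex (normalizer (S : Set G))) := by
    rw [mul_assoc, card_mul_relIndex (H := normIn S P) inf_le_left,
      card_conj_le_sylow_mul_card_normalizer_eq,
      ← card_mul_relIndex (H := S) (K := normalizer (S : Set G)) le_normalizer]
    ring
  rw [S.card_eq_multiplicity] at hcount ⊢
  obtain ⟨k, hk, heq⟩ := hp.exists_not_dvd_and_eq_pow_mul (hfn.not_dvd_relIndex_normalizer hP)
    (hp.not_dvd_mul hsylow S.not_dvd_relIndex_normalizer) hcount
  exact ⟨k, Nat.pos_of_ne_zero (by rintro rfl; exact hk (dvd_zero p)), hk, heq⟩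
end

section
/- Let P ≤ S be a fully normalized subgroup. Then there exists a positive integer k' not divisible by p such that |N_G(P,S)| · |C_S(P)| = |S| · |C_G(P)| · k'. (Equivalently, the number of group homomorphisms P → S induced by conjugation by elements of G, which equals |N_G(P,S)|/|C_G(P)|, is (|S|/|C_S(P)|)·k' with p ∤ k'; this is the second half of the paper's Lemma on fully normalized subgroups, specialized to F = F_S(G).) -/
/-- The transporter `N_G(A,B) = {g ∈ G : gAg⁻¹ ≤ B}`. -/
def transporter {G : Type*} [Group G] (A B : Subgroup G) : Set G :=
  {g : G | ∀ a ∈ A, g * a * g⁻¹ ∈ B}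

/-!
Right multiplication by `S` makes the transporter `N_G(P,S)` a union of `S`-cosets, and
`g ↦ g⁻¹S` identifies these cosets with the set `D` of fixed points of `P` on `G/S`; so
`|N_G(P,S)| = |S| |D|`, and `|D| ≡ [G : S] ≢ 0 (mod p)` because `P` is a `p`-group.
The centralizer `C_G(P)` acts on `D` with `p`-group stabilizers (they lie in conjugates of `S`),
so every orbit size, hence `|D|`, is a multiple of `[C_G(P) : C_S(P)]` as soon as this index is
prime to `p`. That is where full normalization enters: `N_S(P)` is then a Sylow subgroup of `N_G(P)`, and
`C_S(P) = N_S(P) ∩ C_G(P)` with `C_G(P)` normal in `N_G(P)`. Take `k' = |D| / [C_G(P) : C_S(P)]`.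
-/

section

open Subgroup MulAction

section FixedPointsOnCosets

variable {G : Type*} [Group G]

theorem mk_mem_fixedPoints_quotient_iff {H K : Subgroup G} {g : G} :
    (g : G ⧸ K) ∈ fixedPoints H (G ⧸ K) ↔ ∀ h ∈ H, g⁻¹ * h * g ∈ K := by
  simp only [mem_fixedPoints, Subtype.forall]
  refine forall₂_congr fun h _ => ?_
  change ((h * g : G) : G ⧸ K) = g ↔ _
  rw [eq_comm, QuotientGroup.eq, ← mul_assoc]

theorem transporter_eq_inv_preimage_fixedPoints (A B : Subgroup G) :
    transporter A B = (QuotientGroup.mk ⁻¹' fixedPoints A (G ⧸ B))⁻¹ := by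
  ext g
  simp only [Set.mem_inv, Set.mem_preimage, mk_mem_fixedPoints_quotient_iff, inv_inv]
  rfl

theorem card_transporter (A B : Subgroup G) :
    Nat.card (transporter A B) = Nat.card B * Nat.card (fixedPoints A (G ⧸ B)) := by
  rw [transporter_eq_inv_preimage_fixedPoints, Nat.card_coe_set_eq, Set.ncard_inv,
    ← Nat.card_coe_set_eq, QuotientGroup.card_preimage_mk]

theorem not_dvd_card_fixedPoints_quotient_sylow {p : ℕ} [Fact p.Prime] [Finite G]
    {P : Subgroup G} (hP : IsPGroup p P) (S : Sylow p G) :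
    ¬ p ∣ Nat.card (fixedPoints P (G ⧸ (S : Subgroup G))) := by
  rw [← (hP.card_modEq_card_fixedPoints _).dvd_iff dvd_rfl]
  exact S.not_dvd_index

theorem isPGroup_stabilizer_quotient {p : ℕ} {S : Subgroup G} (hS : IsPGroup p S)
    (x : G ⧸ S) : IsPGroup p (stabilizer G x) := by
  induction x using QuotientGroup.induction_on with
  | H g =>
    have hg : (g : G ⧸ S) = g • ((1 : G) : G ⧸ S) := by
      rw [MulAction.Quotient.smul_mk, smul_eq_mul, mul_one]
    rw [hg, stabilizer_smul_eq_stabilizer_map_conj, stabilizer_quotient]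
    exact hS.map _

def fixedPointsSubMulOfCentralizer (P : Subgroup G) (α : Type*) [MulAction G α] :
    SubMulAction (centralizer (P : Set G)) α where
  carrier := fixedPoints P α
  smul_mem' c a ha x := by
    change (x : G) • (c : G) • a = (c : G) • a
    rw [smul_smul, mem_centralizer_iff.mp c.2 x x.2, mul_smul]
    exact congrArg _ (ha x)

end FixedPointsOnCosets

theorem dvd_card_of_forall_dvd_index_stabilizer {H X : Type*} [Group H] [MulAction H X]
    [Finite X] {m : ℕ} (h : ∀ x : X, m ∣ (stabilizer H x).index) : m ∣ Nat.card X := by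
  have := Fintype.ofFinite (orbitRel.Quotient H X)
  rw [Nat.card_congr (selfEquivSigmaOrbits H X), Nat.card_sigma]
  exact Finset.dvd_sum fun ω _ => by rw [Nat.card_coe_set_eq, ← index_stabilizer]; exact h _

theorem IsPGroup.dvd_index {p : ℕ} [Fact p.Prime] {H : Type*} [Group H] [Finite H]
    {K : Subgroup H} (hK : IsPGroup p K) {m : ℕ} (hmH : m ∣ Nat.card H) (hm : ¬ p ∣ m) :
    m ∣ K.index := by
  obtain ⟨n, hn⟩ := IsPGroup.iff_card.mp hK
  have hcop : m.Coprime (Nat.card K) :=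
    hn ▸ (Nat.Coprime.pow_right n ((Nat.Prime.coprime_iff_not_dvd Fact.out).mpr hm).symm)
  rw [← card_mul_index K] at hmH
  exact hcop.dvd_of_dvd_mul_left hmH

theorem dvd_card_fixedPoints_of_isPGroup_stabilizer {p : ℕ} [Fact p.Prime] {G α : Type*}
    [Group G] [Finite G] [MulAction G α] [Finite α] (P : Subgroup G)
    (hα : ∀ x : α, IsPGroup p (stabilizer G x)) {m : ℕ}
    (hmC : m ∣ Nat.card (centralizer (P : Set G))) (hm : ¬ p ∣ m) :
    m ∣ Nat.card (fixedPoints P α) :=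
  dvd_card_of_forall_dvd_index_stabilizer (X := fixedPointsSubMulOfCentralizer P α) fun x => by
    rw [SubMulAction.stabilizer_of_subMul]
    exact (hα x).comap_subtype.dvd_index hmC hm

theorem Subgroup.relIndex_dvd_index_of_normal_right {G : Type*} [Group G] [Finite G]
    (H K : Subgroup G) [K.Normal] : H.relIndex K ∣ H.index := by
  -- `[K : H ⊓ K] = [H ⊔ K : H]`, read off from `[H ⊔ K : H ⊓ K]` computed in two ways
  have key := relIndex_inf_mul_relIndex H K (H ⊔ K)
  rw [inf_of_le_left le_sup_right, relIndex_sup_right,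
    ← relIndex_mul_relIndex (H ⊓ K) H (H ⊔ K) inf_le_left le_sup_left, inf_relIndex_left,
    mul_comm] at key
  rw [Nat.eq_of_mul_eq_mul_left (Nat.pos_of_ne_zero index_ne_zero_of_finite) key]
  exact relIndex_dvd_index_of_le le_sup_left

section FullyNormalized

variable {p : ℕ} [Fact p.Prime] {G : Type*} [Group G] [Finite G]

theorem Sylow.exists_map_conj_le {X : Subgroup G} (hX : IsPGroup p X) (S : Sylow p G) :
    ∃ g : G, X.map (MulAut.conj g).toMonoidHom ≤ S := by
  obtain ⟨S', hS'⟩ := hX.exists_le_sylow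
  obtain ⟨g, rfl⟩ := MulAction.exists_smul_eq G S' S
  exact ⟨g, map_mono hS'⟩

theorem FullyNormalized.card_le {S : Sylow p G} {P X : Subgroup G} (hfn : FullyNormalized S P)
    (hX : IsPGroup p X) (hPX : P ≤ X) (hXN : X ≤ normalizer (P : Set G)) :
    Nat.card X ≤ Nat.card (normIn S P) := by
  obtain ⟨g, hg⟩ := Sylow.exists_map_conj_le hX S
  set f := (MulAut.conj g).toMonoidHom
  have hXQ : X.map f ≤ normIn S (P.map f) :=
    le_inf ((map_mono hXN).trans (le_normalizer_map f)) hg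
  calc Nat.card X = Nat.card (X.map f) := (card_map_of_injective (MulAut.conj g).injective).symm
    _ ≤ Nat.card (normIn S (P.map f)) := card_le_of_le hXQ
    _ ≤ Nat.card (normIn S P) := hfn _ ((map_mono hPX).trans hg) ⟨g, rfl⟩

theorem FullyNormalized.not_dvd_relIndex_normIn {S : Sylow p G} {P : Subgroup G}
    (hfn : FullyNormalized S P) (hP : P ≤ S) :
    ¬ p ∣ (normIn S P).relIndex (normalizer (P : Set G)) := by
  set N := normalizer (P : Set G)
  have hMN : normIn S P ≤ N := inf_le_left
  obtain ⟨R, hR⟩ : ∃ R : Sylow p N, (normIn S P).subgroupOf N ≤ R :=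
    (S.isPGroup'.to_le (inf_le_right : normIn S P ≤ S)).comap_subtype.exists_le_sylow
  have hMR : normIn S P ≤ (R : Subgroup N).map N.subtype := by
    have := map_mono (f := N.subtype) hR
    rwa [subgroupOf_map_subtype, inf_of_le_left hMN] at this
  have hcard := hfn.card_le (R.isPGroup'.map _) ((le_inf le_normalizer hP).trans hMR)
    (map_subtype_le _)
  have hMR' : (normIn S P).subgroupOf N = R := by
    refine eq_of_le_of_card_ge hR ?_
    rw [card_subtype] at hcard
    rwa [Nat.card_congr (subgroupOfEquivOfLe hMN).toEquiv]
  rw [relIndex, hMR']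
  exact R.not_dvd_index

theorem FullyNormalized.not_dvd_relIndex_centralizer {S : Sylow p G} {P : Subgroup G}
    (hfn : FullyNormalized S P) (hP : P ≤ S) :
    ¬ p ∣ (centralizer (P : Set G) ⊓ S).relIndex (centralizer (P : Set G)) := by
  have hCN := centralizer_le_normalizer (P : Set G)
  have hdvd : (normIn S P).relIndex (centralizer (P : Set G)) ∣
      (normIn S P).relIndex (normalizer (P : Set G)) := by
    rw [← relIndex_subgroupOf hCN]
    exact relIndex_dvd_index_of_normal_right _ _
  rw [← inf_relIndex_right, normIn, inf_right_comm, inf_of_le_right hCN] at hdvd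
  exact fun h => hfn.not_dvd_relIndex_normIn hP (h.trans hdvd)

end FullyNormalized

end

theorem stmt1 (p : ℕ) [Fact p.Prime] (G : Type*) [Group G] [Fintype G]
    (S : Sylow p G) (P : Subgroup G) (hP : P ≤ ↑S)
    (hfn : FullyNormalized ↑S P) :
    ∃ k' : ℕ, 0 < k' ∧ ¬ p ∣ k' ∧
      Nat.card ↥(transporter P ↑S) *
          Nat.card ↥(Subgroup.centralizer (P : Set G) ⊓ ↑S) =
        Nat.card ↥(S : Subgroup G) *
          Nat.card ↥(Subgroup.centralizer (P : Set G)) * k' := by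
  set C := Subgroup.centralizer (P : Set G)
  have hD : ¬ p ∣ Nat.card (MulAction.fixedPoints P (G ⧸ (S : Subgroup G))) :=
    not_dvd_card_fixedPoints_quotient_sylow (S.isPGroup'.to_le hP) S
  have hm : ¬ p ∣ (C ⊓ S).relIndex C := hfn.not_dvd_relIndex_centralizer hP
  obtain ⟨k', hk'⟩ :
      (C ⊓ S).relIndex C ∣ Nat.card (MulAction.fixedPoints P (G ⧸ (S : Subgroup G))) :=
    dvd_card_fixedPoints_of_isPGroup_stabilizer P (isPGroup_stabilizer_quotient S.isPGroup')
      (Subgroup.relIndex_dvd_card _ _) hm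
  refine ⟨k', Nat.pos_of_ne_zero ?_, fun h => hD (hk' ▸ dvd_mul_of_dvd_right h _), ?_⟩
  · rintro rfl
    exact hD (hk' ▸ dvd_zero p)
  · have hC : Nat.card (C ⊓ S : Subgroup G) * (C ⊓ S).relIndex C = Nat.card C := by
      simpa only [Subgroup.relIndex_bot_left] using
        Subgroup.relIndex_mul_relIndex ⊥ _ _ bot_le inf_le_left
    rw [card_transporter, ← hC, hk']
    ring
end

section
/- Let Q, P ≤ S be subgroups and let m denote the number of subgroups of S that are G-conjugate to Q. Then: (a) for every subgroup Q' ≤ S that is G-conjugate to Q, the p-adic valuation of m is at most the p-adic valuation of |S|/|N_S(Q')| (the number of S-conjugates of Q'); (b) the average (1/m) · Σ_{Q'} |(S/P)^{Q'}|, where Q' runs over all subgroups of S that are G-conjugate to Q, equals the rational number (|N_G(Q,P)| · |S|) / (|P| · |N_G(Q,S)|), and this rational number is p-integral. (Specialization to F = F_S(G) of the paper's Lemma on weighted means of fixed-point numbers.) -/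
/-- A rational number is `p`-integral if it can be written with a denominator
prime to `p`. -/
def IsPIntegral (p : ℕ) (q : ℚ) : Prop :=
  ∃ a b : ℤ, ¬ (p : ℤ) ∣ b ∧ q * b = a

/-- The number of `Q`-fixed points of the left coset space `S/P`,
i.e. `|(S/P)^Q|`. -/
noncomputable def cosetFixCard {G : Type*} [Group G] (S P Q : Subgroup G) : ℕ :=
  Nat.card ↥{x : ↥S ⧸ P.subgroupOf S | ∀ s : ↥S, (s : G) ∈ Q → s • x = x}

/-!
Conjugation by `g` carries `Q` into `R` exactly when `g • Q` is a conjugate of `Q` lying in `R`, so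
`|N_G(Q,R)| = #{Q' ≤ R conjugate to Q} · |N_G(Q)|`. For `R = S`, counting instead the Sylow
subgroups `g⁻¹ • S ⊇ Q`, of which there are `≡ 1 mod p`, shows `|N_G(Q,S)| = |S| · u` with `p ∤ u`.
This gives (a) after comparing with `N_S(Q') ≤ N_G(Q')`, and the integrality in (b) since
`N_G(Q,P)` is a union of cosets of `P`. The average in (b) is a double count of the pairs `(Q', s)`,
with `Q' ≤ S` conjugate to `Q` and `s ∈ S`, such that `Q' ≤ sPs⁻¹`: the fibre over `Q'` has
`|P| · |(S/P)^{Q'}|` elements, and `Q' ↦ s⁻¹Q's` identifies the fibre over `s` with the conjugates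
of `Q` inside `P`.
-/

open Pointwise MulAction ConjAct

theorem MulAction.card_smul_mem {α X : Type*} [Group α] [MulAction α X] (x : X) (Y : Set X) :
    Nat.card {g : α // g • x ∈ Y} = Nat.card ↥(orbit α x ∩ Y) * Nat.card (stabilizer α x) := by
  let t : Set (α ⧸ stabilizer α x) := {q | ((orbitEquivQuotientStabilizer α x).symm q : X) ∈ Y}
  have ht : ↥t ≃ ↥(orbit α x ∩ Y) :=
    ((orbitEquivQuotientStabilizer α x).symm.subtypeEquiv fun _ => Iff.rfl).trans
      (Equiv.subtypeSubtypeEquivSubtypeInter _ _)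
  rw [← Nat.card_congr ht, mul_comm, ← Nat.card_prod,
    ← Nat.card_congr (QuotientGroup.preimageMkEquivSubgroupProdSet _ t)]
  rfl

section CosetFixedPoints

variable {H : Type*} [Group H] {P Q : Subgroup H}

theorem QuotientGroup.mk_mem_fixedPoints_iff {h : H} :
    (h : H ⧸ P) ∈ fixedPoints Q (H ⧸ P) ↔ Q ≤ toConjAct h • P := by
  have key : ∀ q : H, q • (h : H ⧸ P) = h ↔ h⁻¹ * q⁻¹ * h ∈ P := fun q => by
    rw [MulAction.Quotient.smul_coe, QuotientGroup.eq, smul_eq_mul, mul_inv_rev]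
  simp only [mem_fixedPoints, Subtype.forall, SetLike.le_def,
    Subgroup.mem_pointwise_smul_iff_inv_smul_mem, ConjAct.smul_def, map_inv, ofConjAct_toConjAct,
    inv_inv]
  exact ⟨fun hfix q hq => by simpa using (key q⁻¹).mp (hfix q⁻¹ (inv_mem hq)),
    fun hle q hq => (key q).mpr (hle (inv_mem hq))⟩

theorem card_le_conjAct_smul_eq_card_mul_card_fixedPoints :
    Nat.card {h : H // Q ≤ toConjAct h • P} = Nat.card P * Nat.card (fixedPoints Q (H ⧸ P)) := by
  rw [← Nat.card_prod, ← Nat.card_congr (QuotientGroup.preimageMkEquivSubgroupProdSet P _)]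
  exact Nat.card_congr (Equiv.subtypeEquivRight fun _ => QuotientGroup.mk_mem_fixedPoints_iff.symm)

end CosetFixedPoints

section Conjugacy

variable {G : Type*} [Group G]

theorem gConj_iff_mem_orbit {Q K : Subgroup G} : GConj Q K ↔ K ∈ orbit (ConjAct G) Q :=
  ⟨fun ⟨g, h⟩ => ⟨toConjAct g, h⟩, fun ⟨c, h⟩ => ⟨ofConjAct c, h⟩⟩

theorem gConj_smul {Q K : Subgroup G} (hK : GConj Q K) (c : ConjAct G) : GConj Q (c • K) :=
  gConj_iff_mem_orbit.mpr (mem_orbit_of_mem_orbit c (gConj_iff_mem_orbit.mp hK))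

theorem card_le_gConj_congr {Q Q' : Subgroup G} (h : GConj Q Q') (R : Subgroup G) :
    Nat.card {K : Subgroup G // K ≤ R ∧ GConj Q K} =
      Nat.card {K : Subgroup G // K ≤ R ∧ GConj Q' K} := by
  have horb : orbit (ConjAct G) Q' = orbit (ConjAct G) Q :=
    orbit_eq_iff.mpr (gConj_iff_mem_orbit.mp h)
  exact Nat.card_congr (Equiv.subtypeEquivRight fun K => by simp only [gConj_iff_mem_orbit, horb])

theorem card_stabilizer_conjAct (H : Subgroup G) :
    Nat.card (stabilizer (ConjAct G) H) = Nat.card (Subgroup.normalizer (H : Set G)) :=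
  Nat.card_congr (ofConjAct.toEquiv.subtypeEquiv fun _ =>
    Subgroup.mem_normalizer_iff_map_conj_eq.symm)

theorem mem_transporter_iff {A B : Subgroup G} {g : G} :
    g ∈ transporter A B ↔ toConjAct g • A ≤ B := by
  rw [Subgroup.pointwise_smul_subset_iff]
  simp only [SetLike.le_def, Subgroup.mem_pointwise_smul_iff_inv_smul_mem, inv_inv,
    ConjAct.smul_def, ofConjAct_toConjAct]
  rfl

theorem card_transporter_s3 (Q R : Subgroup G) :
    Nat.card (transporter Q R) =
      Nat.card {K : Subgroup G // K ≤ R ∧ GConj Q K} *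
        Nat.card (Subgroup.normalizer (Q : Set G)) := by
  have e : transporter Q R ≃ {c : ConjAct G // c • Q ∈ Set.Iic R} :=
    toConjAct.toEquiv.subtypeEquiv fun _ => mem_transporter_iff
  have e' : {K : Subgroup G // K ≤ R ∧ GConj Q K} ≃ ↥(orbit (ConjAct G) Q ∩ Set.Iic R) :=
    Equiv.subtypeEquivRight fun K => by rw [gConj_iff_mem_orbit, and_comm]; rfl
  rw [Nat.card_congr e, card_smul_mem, card_stabilizer_conjAct, Nat.card_congr e']

theorem card_dvd_card_transporter (Q R : Subgroup G) :
    Nat.card R ∣ Nat.card (transporter Q R) := by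
  have e : transporter Q R ≃ {g : G // Q ≤ toConjAct g • R} :=
    (Equiv.inv G).subtypeEquiv fun g => by
      rw [mem_transporter_iff, Subgroup.pointwise_smul_subset_iff, Equiv.inv_apply, map_inv]
  rw [Nat.card_congr e, card_le_conjAct_smul_eq_card_mul_card_fixedPoints]
  exact dvd_mul_right _ _

end Conjugacy

section Sylow

variable {p : ℕ} [Fact p.Prime] {G : Type*} [Group G] [Finite G]

theorem card_sylow_le_modEq_one {Q : Subgroup G} (hQ : IsPGroup p Q) :
    Nat.card {T : Sylow p G // Q ≤ T} ≡ 1 [MOD p] := by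
  have hfix : Nat.card (fixedPoints Q (Sylow p G)) = Nat.card {T : Sylow p G // Q ≤ T} :=
    Nat.card_congr (Equiv.subtypeEquivRight fun _ => hQ.sylow_mem_fixedPoints_iff)
  exact hfix ▸ (hQ.card_modEq_card_fixedPoints _).symm.trans (card_sylow_modEq_one p G)

theorem card_transporter_mul_card_sylow (Q : Subgroup G) (S : Sylow p G) :
    Nat.card (transporter Q S) * Nat.card (Sylow p G) =
      Nat.card {T : Sylow p G // Q ≤ T} * Nat.card G := by
  have e : transporter Q S ≃ {g : G // g • S ∈ {T : Sylow p G | Q ≤ T}} :=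
    (Equiv.inv G).subtypeEquiv fun g => by
      rw [mem_transporter_iff, Subgroup.pointwise_smul_subset_iff]; rfl
  rw [Nat.card_congr e, card_smul_mem, orbit_eq_univ, Set.univ_inter, mul_assoc,
    ← index_stabilizer_of_transitive G S, Subgroup.card_mul_index]
  rfl

theorem exists_card_transporter_eq_card_sylow_mul {Q : Subgroup G} (hQ : IsPGroup p Q)
    (S : Sylow p G) : ∃ u, ¬ p ∣ u ∧ Nat.card (transporter Q S) = Nat.card S * u := by
  have hp := (Fact.out : p.Prime)
  obtain ⟨u, hu⟩ := card_dvd_card_transporter Q S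
  refine ⟨u, fun hpu => ?_, hu⟩
  have hcount := card_transporter_mul_card_sylow Q S
  rw [hu, ← (S : Subgroup G).card_mul_index, mul_assoc, mul_left_comm _ (Nat.card S)] at hcount
  have hdvd : p ∣ Nat.card {T : Sylow p G // Q ≤ T} * (S : Subgroup G).index :=
    Nat.eq_of_mul_eq_mul_left Nat.card_pos hcount ▸ dvd_mul_of_dvd_left hpu _
  rcases hp.dvd_mul.mp hdvd with hk | hi
  · have h01 := (Nat.modEq_zero_iff_dvd.mpr hk).symm.trans (card_sylow_le_modEq_one hQ)
    exact hp.not_dvd_one (Nat.modEq_zero_iff_dvd.mp h01.symm)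
  · exact S.not_dvd_index hi

end Sylow

section FixedPointSum

variable {G : Type*} [Group G] {S P : Subgroup G}

theorem card_le_conjAct_smul_eq_card_mul_cosetFixCard (hP : P ≤ S) {Q' : Subgroup G}
    (hQ' : Q' ≤ S) :
    Nat.card {s : S // Q' ≤ toConjAct (s : G) • P} = Nat.card P * cosetFixCard S P Q' := by
  have e : {s : S // Q' ≤ toConjAct (s : G) • P} ≃
      {s : S // Q'.subgroupOf S ≤ toConjAct s • P.subgroupOf S} :=
    Equiv.subtypeEquivRight fun s => by
      simp only [SetLike.le_def, Subgroup.mem_pointwise_smul_iff_inv_smul_mem, ConjAct.smul_def,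
        Subgroup.mem_subgroupOf, Subtype.forall, map_inv, ofConjAct_toConjAct, Subgroup.coe_mul,
        InvMemClass.coe_inv]
      exact ⟨fun h x _ hx => h hx, fun h x hx => h x (hQ' hx) hx⟩
  have hfix : cosetFixCard S P Q' =
      Nat.card (fixedPoints (Q'.subgroupOf S) (S ⧸ P.subgroupOf S)) :=
    Nat.card_congr (Equiv.subtypeEquivRight fun _ =>
      ⟨fun h m => h m m.2, fun h s hs => h ⟨s, hs⟩⟩)
  rw [Nat.card_congr e, card_le_conjAct_smul_eq_card_mul_card_fixedPoints, hfix,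
    Nat.card_congr (Subgroup.subgroupOfEquivOfLe hP).toEquiv]

theorem finsum_card_le_conjAct_smul [Finite G] (hP : P ≤ S) (Q : Subgroup G) :
    ∑ᶠ K ∈ {K : Subgroup G | K ≤ S ∧ GConj Q K}, Nat.card {s : S // K ≤ toConjAct (s : G) • P} =
      Nat.card S * Nat.card {K : Subgroup G // K ≤ P ∧ GConj Q K} := by
  let X := {K : Subgroup G | K ≤ S ∧ GConj Q K}
  have : Fintype X := Fintype.ofFinite X
  have e : {c : X × S // c.1.1 ≤ toConjAct (c.2 : G) • P} ≃
      S × {K : Subgroup G // K ≤ P ∧ GConj Q K} :=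
    { toFun c := (c.1.2, ⟨(toConjAct (c.1.2 : G))⁻¹ • c.1.1.1,
        Subgroup.subset_pointwise_smul_iff.mp c.2, gConj_smul c.1.1.2.2 _⟩)
      invFun c := ⟨(⟨toConjAct (c.1 : G) • c.2.1,
          (Subgroup.pointwise_smul_le_pointwise_smul_iff.mpr (c.2.2.1.trans hP)).trans_eq
            (Subgroup.conj_smul_eq_self_of_mem c.1.2),
          gConj_smul c.2.2.2 _⟩, c.1),
        Subgroup.pointwise_smul_le_pointwise_smul_iff.mpr c.2.2.1⟩
      left_inv c := Subtype.ext (Prod.ext (Subtype.ext (smul_inv_smul _ _)) rfl)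
      right_inv c := Prod.ext rfl (Subtype.ext (inv_smul_smul _ _)) }
  rw [← finsum_set_coe_eq_finsum_mem, finsum_eq_sum_of_fintype, ← Nat.card_sigma,
    ← Nat.card_prod, ← Nat.card_congr e]
  exact Nat.card_congr (Equiv.subtypeProdEquivSigmaSubtype _).symm

theorem card_mul_finsum_cosetFixCard [Finite G] (hP : P ≤ S) (Q : Subgroup G) :
    Nat.card P * ∑ᶠ K ∈ {K : Subgroup G | K ≤ S ∧ GConj Q K}, cosetFixCard S P K =
      Nat.card S * Nat.card {K : Subgroup G // K ≤ P ∧ GConj Q K} := by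
  rw [← finsum_card_le_conjAct_smul hP Q, mul_finsum_mem]
  exact finsum_mem_congr rfl fun K hK =>
    (card_le_conjAct_smul_eq_card_mul_cosetFixCard hP hK.1).symm

end FixedPointSum

theorem padicValNat_le_padicValNat_div {p m ν s n u : ℕ} [Fact p.Prime] (hs : s ≠ 0)
    (hnν : n ∣ ν) (hns : n ∣ s) (hu : ¬ p ∣ u) (h : m * ν = s * u) :
    padicValNat p m ≤ padicValNat p (s / n) := by
  obtain ⟨w, rfl⟩ := hnν
  obtain ⟨t, rfl⟩ := hns
  have hn : n ≠ 0 := left_ne_zero_of_mul hs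
  have hmt : m * w = t * u := by
    apply Nat.eq_of_mul_eq_mul_left (Nat.pos_of_ne_zero hn)
    calc n * (m * w) = m * (n * w) := by ring
      _ = n * t * u := h
      _ = n * (t * u) := by ring
  rw [Nat.mul_div_cancel_left t (Nat.pos_of_ne_zero hn)]
  have hcop : (p ^ padicValNat p m).Coprime u :=
    Nat.Coprime.pow_left _ ((Nat.Prime.coprime_iff_not_dvd Fact.out).mpr hu)
  refine (padicValNat_dvd_iff_le (right_ne_zero_of_mul hs)).mp (hcop.dvd_of_dvd_mul_right ?_)
  exact pow_padicValNat_dvd.trans (Dvd.intro w hmt)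

theorem isPIntegral_natCast_div {p u : ℕ} (a : ℕ) (hu : ¬ p ∣ u) : IsPIntegral p ((a : ℚ) / u) := by
  have hu0 : (u : ℚ) ≠ 0 := Nat.cast_ne_zero.mpr (by rintro rfl; exact hu (dvd_zero p))
  exact ⟨a, u, by exact_mod_cast hu, by push_cast; field_simp⟩

theorem stmt3 (p : ℕ) [Fact p.Prime] (G : Type*) [Group G] [Fintype G]
    (S : Sylow p G) (Q P : Subgroup G) (hQ : Q ≤ ↑S) (hP : P ≤ ↑S) :
    (∀ Q' : Subgroup G, Q' ≤ ↑S → GConj Q Q' →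
        padicValNat p (Nat.card {Q'' : Subgroup G // Q'' ≤ ↑S ∧ GConj Q Q''}) ≤
          padicValNat p
            (Nat.card ↥(S : Subgroup G) / Nat.card ↥(normIn ↑S Q'))) ∧
      (∑ᶠ Q' ∈ {Q' : Subgroup G | Q' ≤ ↑S ∧ GConj Q Q'},
            (cosetFixCard ↑S P Q' : ℚ)) /
          (Nat.card {Q'' : Subgroup G // Q'' ≤ ↑S ∧ GConj Q Q''} : ℚ) =
        (Nat.card ↥(transporter Q P) * Nat.card ↥(S : Subgroup G) : ℚ) /
          (Nat.card ↥P * Nat.card ↥(transporter Q ↑S)) ∧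
      IsPIntegral p
        ((Nat.card ↥(transporter Q P) * Nat.card ↥(S : Subgroup G) : ℚ) /
          (Nat.card ↥P * Nat.card ↥(transporter Q ↑S))) := by
  have hm : (Nat.card {K : Subgroup G // K ≤ S ∧ GConj Q K} : ℚ) ≠ 0 := Nat.cast_ne_zero.mpr
    (Nat.card_ne_zero.mpr ⟨⟨⟨Q, hQ, gConj_iff_mem_orbit.mpr (mem_orbit_self Q)⟩⟩, inferInstance⟩)
  have hν : (Nat.card (Subgroup.normalizer (Q : Set G)) : ℚ) ≠ 0 :=
    Nat.cast_ne_zero.mpr Nat.card_pos.ne'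
  have hS : (Nat.card S : ℚ) ≠ 0 := Nat.cast_ne_zero.mpr Nat.card_pos.ne'
  have hP0 : (Nat.card P : ℚ) ≠ 0 := Nat.cast_ne_zero.mpr Nat.card_pos.ne'
  obtain ⟨u, hu, hTS⟩ := exists_card_transporter_eq_card_sylow_mul (S.isPGroup'.to_le hQ) S
  obtain ⟨a, hTP⟩ := card_dvd_card_transporter Q P
  refine ⟨fun Q' hQ' hQQ' => ?_, ?_, ?_⟩
  · obtain ⟨u', hu', hT'⟩ := exists_card_transporter_eq_card_sylow_mul (S.isPGroup'.to_le hQ') S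
    rw [card_transporter_s3] at hT'
    rw [card_le_gConj_congr hQQ' S]
    exact padicValNat_le_padicValNat_div Nat.card_pos.ne' (Subgroup.card_dvd_of_le inf_le_left)
      (Subgroup.card_dvd_of_le inf_le_right) hu' hT'
  · have hsum := congrArg (Nat.cast : ℕ → ℚ) (card_mul_finsum_cosetFixCard hP Q)
    rw [Nat.cast_mul, Nat.cast_mul] at hsum
    rw [← Nat.cast_finsum_mem (Set.toFinite _), card_transporter_s3, card_transporter_s3, Nat.cast_mul,
      Nat.cast_mul, div_eq_div_iff hm (mul_ne_zero hP0 (mul_ne_zero hm hν))]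
    linear_combination (Nat.card {K : Subgroup G // K ≤ S ∧ GConj Q K} *
      Nat.card (Subgroup.normalizer (Q : Set G)) : ℚ) * hsum
  · rw [hTP, hTS, show ((Nat.card P * a : ℕ) * Nat.card S : ℚ) / (Nat.card P * (Nat.card S * u : ℕ))
      = (a : ℚ) / u by push_cast; field_simp]
    exact isPIntegral_natCast_div a hu
end

section
/- Let S be a finite p-group and let f be a function from the set of subgroups of S to the integers such that f(Q) ∈ {0,1} for every subgroup Q ≤ S, and such that for every subgroup Q ≤ S the integer Σ_{s ∈ N_S(Q)} f(⟨s⟩Q) is divisible by |N_S(Q)|, where ⟨s⟩Q denotes the subgroup of S generated by s and Q. Then f is constant, i.e. f(Q) = f(S) for all Q ≤ S. (This is the combinatorial core of the paper's Corollary that 0 and [S/S] are the only idempotents of A(F)_(p), which yields the uniqueness of the characteristic idempotent ω_F: an idempotent of A(F)_(p) has all its marks in {0,1} and its mark vector satisfies exactly these congruences.) -/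
/-!
Downward induction on `Q`. For `Q < S` the normalizer condition of the nilpotent group `S` gives
`Q < N_S(Q)`. For `s ∈ Q` we have `⟨s⟩Q = Q`, while for `s ∈ N_S(Q) \ Q` the subgroup `⟨s⟩Q` is
strictly larger than `Q`, so `f(⟨s⟩Q) = f(S)` by induction. With `q = |Q|` and
`r = |N_S(Q) \ Q|`, both positive, the congruence becomes `q + r ∣ q f(Q) + r f(S)`, that is
`q + r ∣ q (f(Q) - f(S))`; as `|f(Q) - f(S)| ≤ 1`, this forces `f(Q) = f(S)`.
-/

open Subgroup

theorem Set.Finite.finsum_mem_const {α M : Type*} [AddCommMonoid M] {s : Set α}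
    (hs : s.Finite) (a : M) : ∑ᶠ _ ∈ s, a = s.ncard • a := by
  rw [finsum_mem_eq_finite_toFinset_sum _ hs, Finset.sum_const, Set.ncard_eq_toFinset_card _ hs]

theorem finsum_mem_eq_of_eqOn_of_eqOn_sdiff {α M : Type*} [AddCommMonoid M] {s t : Set α}
    (hst : s ⊆ t) (ht : t.Finite) {φ : α → M} {a b : M} (ha : ∀ x ∈ s, φ x = a)
    (hb : ∀ x ∈ t \ s, φ x = b) :
    ∑ᶠ x ∈ t, φ x = s.ncard • a + (t \ s).ncard • b := by
  rw [← finsum_mem_add_sdiff hst ht, finsum_mem_congr rfl ha, finsum_mem_congr rfl hb,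
    (ht.subset hst).finsum_mem_const, ht.sdiff.finsum_mem_const]

theorem eq_of_add_dvd_mul_add_mul {q r : ℕ} {a b : ℤ} (hq : 0 < q) (hr : 0 < r)
    (ha : a = 0 ∨ a = 1) (hb : b = 0 ∨ b = 1) (h : (q + r : ℤ) ∣ q * a + r * b) : a = b := by
  have hdvd : (q + r : ℤ) ∣ q * (a - b) := by
    have : (q : ℤ) * (a - b) = q * a + r * b - (q + r) * b := by ring
    rw [this]
    exact dvd_sub h (dvd_mul_right _ _)
  have habs : |(q : ℤ) * (a - b)| < q + r := by
    rw [abs_mul, Nat.abs_cast]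
    rcases ha with rfl | rfl <;> rcases hb with rfl | rfl <;> norm_num <;> omega
  rcases mul_eq_zero.mp (Int.eq_zero_of_abs_lt_dvd hdvd habs) with hq0 | hab
  · omega
  · linarith

theorem Subgroup.closure_singleton_union_eq_self {G : Type*} [Group G] {Q : Subgroup G} {s : G}
    (hs : s ∈ Q) : closure ({s} ∪ (Q : Set G)) = Q := by
  rw [Set.union_eq_self_of_subset_left (Set.singleton_subset_iff.mpr hs), closure_eq]

theorem Subgroup.lt_closure_singleton_union {G : Type*} [Group G] {Q : Subgroup G} {s : G}
    (hs : s ∉ Q) : Q < closure ({s} ∪ (Q : Set G)) :=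
  SetLike.lt_iff_le_and_exists.mpr
    ⟨fun _ hx => subset_closure (Or.inr hx), s, subset_closure (Or.inl rfl), hs⟩

theorem eq_apply_top_of_dvd_finsum_normalizer {G : Type*} [Group G] [Finite G]
    (hG : NormalizerCondition G) (f : Subgroup G → ℤ) (hf01 : ∀ Q, f Q = 0 ∨ f Q = 1)
    (hcong : ∀ Q : Subgroup G, (Nat.card (normalizer (Q : Set G)) : ℤ) ∣
      ∑ᶠ s ∈ (normalizer (Q : Set G) : Set G), f (closure ({s} ∪ (Q : Set G))))
    (Q : Subgroup G) : f Q = f ⊤ := by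
  induction Q using WellFoundedGT.induction with | _ Q ih
  obtain rfl | hQ := eq_or_ne Q ⊤
  · rfl
  set N := normalizer (Q : Set G)
  have hQN : Q < N := hG Q hQ.lt_top
  have hsum : ∑ᶠ s ∈ (N : Set G), f (closure ({s} ∪ (Q : Set G))) =
      (Q : Set G).ncard • f Q + ((N : Set G) \ Q).ncard • f ⊤ :=
    finsum_mem_eq_of_eqOn_of_eqOn_sdiff hQN.le (Set.toFinite _)
      (fun _ hs => by rw [closure_singleton_union_eq_self hs])
      (fun _ hs => ih _ (lt_closure_singleton_union hs.2))
  have hcard : Nat.card N = (Q : Set G).ncard + ((N : Set G) \ Q).ncard := by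
    rw [add_comm, Set.ncard_sdiff_add_ncard_of_subset hQN.le]
    exact Nat.card_coe_set_eq (N : Set G)
  have hcongQ := hcong Q
  rw [hsum, hcard] at hcongQ
  obtain ⟨s, hsN, hsQ⟩ := SetLike.exists_of_lt hQN
  refine eq_of_add_dvd_mul_add_mul ((Set.ncard_pos (s := (Q : Set G))).mpr ⟨1, Q.one_mem⟩)
    ((Set.ncard_pos (s := (N : Set G) \ Q)).mpr ⟨s, hsN, hsQ⟩) (hf01 Q) (hf01 ⊤) ?_
  simpa only [nsmul_eq_mul, Nat.cast_add] using hcongQ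

theorem stmt9 (p : ℕ) [Fact p.Prime] (S : Type*) [Group S] [Fintype S]
    (hS : IsPGroup p S) (f : Subgroup S → ℤ)
    (hf01 : ∀ Q : Subgroup S, f Q = 0 ∨ f Q = 1)
    (hcong : ∀ Q : Subgroup S,
      (Nat.card ↥(Subgroup.normalizer (Q : Set S)) : ℤ) ∣
        ∑ᶠ s ∈ ((Subgroup.normalizer (Q : Set S) : Subgroup S) : Set S),
          f (Subgroup.closure ({s} ∪ (Q : Set S)))) :
    ∀ Q : Subgroup S, f Q = f ⊤ :=
  have := hS.isNilpotent
  eq_apply_top_of_dvd_finsum_normalizer Group.normalizerCondition_of_isNilpotent f hf01 hcong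
end

section
/- Let G₁ and G₂ be finite groups with Sylow p-subgroups S₁ and S₂ respectively, and let X be a finite (S₂ × S₁)-set. Then the following are equivalent: (1) for every subgroup P ≤ S₁ and every g ∈ G₁ with gPg⁻¹ ≤ S₁ there exists a bijection θ : X → X with θ((a,u)·x) = (a, gug⁻¹)·θ(x) for all a ∈ S₂, u ∈ P, x ∈ X, and for every subgroup P ≤ S₂ and every h ∈ G₂ with hPh⁻¹ ≤ S₂ there exists a bijection η : X → X with η((u,b)·x) = (huh⁻¹, b)·η(x) for all u ∈ P, b ∈ S₁, x ∈ X; (2) for every subgroup D ≤ S₂ × S₁ and every (h,g) ∈ G₂ × G₁ such that (h,g)D(h,g)⁻¹ ≤ S₂ × S₁, the fixed-point sets X^D and X^{(h,g)D(h,g)⁻¹} have the same cardinality. (This realizes the paper's Lemma that an (S₁,S₂)-biset is right F₁-stable and left F₂-stable if and only if its marks are constant on (F₂ × F₁)-conjugacy classes of subgroups of S₂ × S₁, for F_i = F_{S_i}(G_i), using that F_{S₂}(G₂) × F_{S₁}(G₁) = F_{S₂×S₁}(G₂×G₁).) -/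
/-!
Both conditions compare the two restrictions of `X` along the maps `L → S₂ × S₁` given by
inclusion and by conjugation in one factor, where `L = S₂ × P` or `P × S₁`: condition (1) asks
for an isomorphism of `L`-sets, condition (2) for equal marks, once conjugation by `(h, g)` is
split into conjugation by `(1, g)` followed by `(h, 1)`. These agree because a finite `G`-set is
determined up to isomorphism by its marks `H ↦ |X^H|`: take a point `x` with maximal stabilizer
`H`; equal marks at `H` and at the stabilizers above it give a point `y` on the other side with
stabilizer exactly `H`, the orbits of `x` and `y` are isomorphic, and removing them leaves
`G`-sets with equal marks, so induction on the size applies.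
-/

open Set Function Pointwise

namespace MulAction

section Marks

variable {G X Y : Type*} [Group G] [MulAction G X] [MulAction G Y]

variable (G) in
def EquivariantBijOn (f : X → Y) (A : Set X) (B : Set Y) : Prop :=
  BijOn f A B ∧ ∀ g : G, ∀ x ∈ A, f (g • x) = g • f x

theorem mem_fixedPoints_iff_le_stabilizer {H : Subgroup G} {x : X} :
    x ∈ fixedPoints H X ↔ H ≤ stabilizer G x := by
  simp [mem_fixedPoints, SetLike.le_def, mem_stabilizer_iff]

theorem smul_eq_smul_of_stabilizer_le {x : X} {y : Y} (h : stabilizer G x ≤ stabilizer G y)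
    {g g' : G} (hx : g • x = g' • x) : g • y = g' • y := by
  have : g⁻¹ * g' ∈ stabilizer G x := by rw [mem_stabilizer_iff, mul_smul, ← hx, inv_smul_smul]
  have hy : (g⁻¹ * g') • y = y := h this
  rw [mul_smul, inv_smul_eq_iff] at hy
  exact hy.symm

theorem exists_equivariantBijOn_orbit_of_stabilizer_eq {x : X} {y : Y}
    (h : stabilizer G x = stabilizer G y) :
    ∃ f : X → Y, EquivariantBijOn G f (orbit G x) (orbit G y) := by
  have hfac : FactorsThrough (· • y) (· • x : G → X) :=
    fun _ _ => smul_eq_smul_of_stabilizer_le h.le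
  set f := extend (· • x : G → X) (· • y) (fun _ => y)
  have hf : ∀ g : G, f (g • x) = g • y := hfac.extend_apply _
  refine ⟨f, ⟨?_, ?_, ?_⟩, ?_⟩
  · rintro _ ⟨g, rfl⟩
    exact ⟨g, (hf g).symm⟩
  · rintro _ ⟨g, rfl⟩ _ ⟨g', rfl⟩ hgg'
    rw [hf, hf] at hgg'
    exact smul_eq_smul_of_stabilizer_le h.ge hgg'
  · rintro _ ⟨g, rfl⟩
    exact ⟨g • x, mem_orbit x g, hf g⟩
  · rintro g _ ⟨g', rfl⟩
    simp only [smul_smul, hf]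

theorem EquivariantBijOn.piecewise {A₁ A₂ : Set X} {B₁ B₂ : Set Y} {f₁ f₂ : X → Y}
    [DecidablePred (· ∈ A₁)] (h₁ : EquivariantBijOn G f₁ A₁ B₁)
    (h₂ : EquivariantBijOn G f₂ A₂ B₂) (hA₁ : ∀ g : G, g • A₁ = A₁)
    (hA₂ : ∀ g : G, g • A₂ = A₂) (hA : Disjoint A₁ A₂) (hB : Disjoint B₁ B₂) :
    EquivariantBijOn G (A₁.piecewise f₁ f₂) (A₁ ∪ A₂) (B₁ ∪ B₂) := by
  have e₁ : EqOn f₁ (A₁.piecewise f₁ f₂) A₁ := (piecewise_eqOn _ _ _).symm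
  have e₂ : EqOn f₂ (A₁.piecewise f₁ f₂) A₂ :=
    ((piecewise_eqOn_compl _ _ _).mono hA.subset_compl_left).symm
  have b₁ := h₁.1.congr e₁
  have b₂ := h₂.1.congr e₂
  refine ⟨b₁.union b₂ ((injOn_union hA).2 ⟨b₁.injOn, b₂.injOn, fun x hx x' hx' =>
    hB.ne_of_mem (b₁.mapsTo hx) (b₂.mapsTo hx')⟩), ?_⟩
  rintro g x (hx | hx)
  · rw [← e₁ hx, ← e₁ (hA₁ g ▸ smul_mem_smul_set hx), h₁.2 g x hx]
  · rw [← e₂ hx, ← e₂ (hA₂ g ▸ smul_mem_smul_set hx), h₂.2 g x hx]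

theorem EquivariantBijOn.bijOn_inter_fixedPoints {A : Set X} {B : Set Y} {f : X → Y}
    (hf : EquivariantBijOn G f A B) (hA : ∀ g : G, g • A = A) (H : Subgroup G) :
    BijOn f (A ∩ fixedPoints H X) (B ∩ fixedPoints H Y) := by
  obtain ⟨hf, hfA⟩ := hf
  refine ⟨fun x ⟨hxA, hxH⟩ => ⟨hf.mapsTo hxA, fun h => ?_⟩,
    hf.injOn.mono inter_subset_left, fun y ⟨hyB, hyH⟩ => ?_⟩
  · rw [Subgroup.smul_def, ← hfA _ x hxA, ← Subgroup.smul_def, hxH h]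
  · obtain ⟨x, hxA, rfl⟩ := hf.surjOn hyB
    refine ⟨x, ⟨hxA, fun h => hf.injOn ?_ hxA ?_⟩, rfl⟩
    · exact hA h ▸ smul_mem_smul_set hxA
    · rw [Subgroup.smul_def, hfA _ x hxA, ← Subgroup.smul_def, hyH h]

variable [Finite X] [Finite Y]

theorem exists_le_stabilizer_iff_of_ncard_inter_fixedPoints_eq {A : Set X} {B : Set Y}
    (hAB : ∀ H : Subgroup G, (A ∩ fixedPoints H X).ncard = (B ∩ fixedPoints H Y).ncard)
    (H : Subgroup G) : (∃ x ∈ A, H ≤ stabilizer G x) ↔ ∃ y ∈ B, H ≤ stabilizer G y := by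
  simp only [← mem_fixedPoints_iff_le_stabilizer, ← mem_inter_iff]
  rw [← Set.nonempty_def, ← Set.nonempty_def, ← ncard_pos, ← ncard_pos, hAB]

theorem exists_stabilizer_eq_of_ncard_inter_fixedPoints_eq {A : Set X} {B : Set Y}
    (hAB : ∀ H : Subgroup G, (A ∩ fixedPoints H X).ncard = (B ∩ fixedPoints H Y).ncard)
    (hA : A.Nonempty) : ∃ x ∈ A, ∃ y ∈ B, stabilizer G x = stabilizer G y := by
  have hiff := exists_le_stabilizer_iff_of_ncard_inter_fixedPoints_eq hAB
  obtain ⟨x, hxA, hmax⟩ := A.toFinite.exists_maximalFor (stabilizer G) A hA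
  obtain ⟨y, hyB, hxy⟩ := (hiff _).mp ⟨x, hxA, le_rfl⟩
  obtain ⟨x', hx'A, hyx'⟩ := (hiff _).mpr ⟨y, hyB, le_rfl⟩
  exact ⟨x, hxA, y, hyB, le_antisymm hxy (hyx'.trans (hmax hx'A (hxy.trans hyx')))⟩

theorem exists_equivariantBijOn_of_ncard_inter_fixedPoints_eq [Nonempty Y] {A : Set X}
    {B : Set Y} (hA : ∀ g : G, g • A = A) (hB : ∀ g : G, g • B = B)
    (hAB : ∀ H : Subgroup G, (A ∩ fixedPoints H X).ncard = (B ∩ fixedPoints H Y).ncard) :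
    ∃ f : X → Y, EquivariantBijOn G f A B := by
  classical
  induction hn : A.ncard using Nat.strong_induction_on generalizing A B with
  | _ n ih =>
  obtain rfl | hAne := A.eq_empty_or_nonempty
  · have hB : B = ∅ := eq_empty_of_forall_notMem fun y hy => by
      obtain ⟨x, hx, -⟩ :=
        (exists_le_stabilizer_iff_of_ncard_inter_fixedPoints_eq hAB _).mpr ⟨y, hy, le_rfl⟩
      exact hx
    exact ⟨fun _ => Classical.arbitrary Y, hB ▸ bijOn_empty _, fun _ _ h => h.elim⟩
  obtain ⟨x, hxA, y, hyB, hxy⟩ := exists_stabilizer_eq_of_ncard_inter_fixedPoints_eq hAB hAne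
  obtain ⟨f₀, hf₀⟩ := exists_equivariantBijOn_orbit_of_stabilizer_eq hxy
  have hOA : orbit G x ⊆ A := fun _ ⟨g, hg⟩ => hg ▸ hA g ▸ smul_mem_smul_set hxA
  have hOB : orbit G y ⊆ B := fun _ ⟨g, hg⟩ => hg ▸ hB g ▸ smul_mem_smul_set hyB
  have hA' (g : G) : g • (A \ orbit G x) = A \ orbit G x := by
    rw [smul_set_sdiff, hA, smul_orbit]
  have hB' (g : G) : g • (B \ orbit G y) = B \ orbit G y := by
    rw [smul_set_sdiff, hB, smul_orbit]
  have hAB' (H : Subgroup G) : ((A \ orbit G x) ∩ fixedPoints H X).ncard =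
      ((B \ orbit G y) ∩ fixedPoints H Y).ncard := by
    rw [inter_sdiff_distrib_right, inter_sdiff_distrib_right,
      ncard_sdiff (inter_subset_inter_left _ hOA), ncard_sdiff (inter_subset_inter_left _ hOB),
      hAB, (hf₀.bijOn_inter_fixedPoints (smul_orbit · x) H).ncard_eq]
  have hlt : (A \ orbit G x).ncard < n :=
    hn ▸ ncard_lt_ncard (sdiff_ssubset_left_iff.mpr ⟨x, hxA, mem_orbit_self x⟩)
  obtain ⟨f₁, hf₁⟩ := ih _ hlt hA' hB' hAB' rfl
  refine ⟨(orbit G x).piecewise f₀ f₁, ?_⟩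
  rw [← union_sdiff_cancel hOA, ← union_sdiff_cancel hOB]
  exact hf₀.piecewise hf₁ (smul_orbit · x) hA' disjoint_sdiff_right disjoint_sdiff_right

theorem exists_equiv_smul_iff_card_fixedPoints_eq :
    (∃ e : X ≃ Y, ∀ (g : G) (x : X), e (g • x) = g • e x) ↔
      ∀ H : Subgroup G, Nat.card (fixedPoints H X) = Nat.card (fixedPoints H Y) := by
  constructor
  · rintro ⟨e, he⟩ H
    simpa only [univ_inter, Nat.card_coe_set_eq] using
      (EquivariantBijOn.bijOn_inter_fixedPoints ⟨bijOn_univ.mpr e.bijective,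
        fun g x _ => he g x⟩ (fun _ => smul_set_univ) H).ncard_eq
  intro h
  have hAB (H : Subgroup G) :
      (univ ∩ fixedPoints H X).ncard = (univ ∩ fixedPoints H Y).ncard := by
    simpa only [univ_inter, Nat.card_coe_set_eq] using h H
  rcases isEmpty_or_nonempty Y with hY | hY
  · have : IsEmpty X := ⟨fun x => by
      obtain ⟨y, -⟩ := (exists_le_stabilizer_iff_of_ncard_inter_fixedPoints_eq hAB _).mp
        ⟨x, mem_univ x, le_rfl⟩
      exact hY.elim y⟩
    exact ⟨Equiv.equivOfIsEmpty X Y, fun _ x => isEmptyElim x⟩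
  obtain ⟨f, hf, hfG⟩ := exists_equivariantBijOn_of_ncard_inter_fixedPoints_eq
    (fun _ => smul_set_univ) (fun _ => smul_set_univ) hAB
  exact ⟨Equiv.ofBijective f (bijOn_univ.mp hf), fun g x => hfG g x (mem_univ x)⟩

end Marks

section Restriction

variable {K L G X Y : Type*} [Group K] [Group L] [Group G] [MulAction K X] [MulAction K Y]
  [Finite X] [Finite Y]

theorem exists_equiv_smul_comp_iff (φ₁ φ₂ : L →* K) :
    (∃ e : X ≃ Y, ∀ (l : L) (x : X), e (φ₁ l • x) = φ₂ l • e x) ↔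
      ∀ H : Subgroup L,
        Nat.card (fixedPoints (H.map φ₁) X) = Nat.card (fixedPoints (H.map φ₂) Y) := by
  let := compHom X φ₁
  let := compHom Y φ₂
  have hX (H : Subgroup L) : fixedPoints (H.map φ₁) X = fixedPoints H X := by
    ext; simp only [mem_fixedPoints, Subtype.forall, Subgroup.mem_map, Subgroup.mk_smul,
      forall_exists_index, and_imp, forall_apply_eq_imp_iff₂]
    rfl
  have hY (H : Subgroup L) : fixedPoints (H.map φ₂) Y = fixedPoints H Y := by
    ext; simp only [mem_fixedPoints, Subtype.forall, Subgroup.mem_map, Subgroup.mk_smul,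
      forall_exists_index, and_imp, forall_apply_eq_imp_iff₂]
    rfl
  simp only [hX, hY]
  exact exists_equiv_smul_iff_card_fixedPoints_eq

theorem exists_equiv_smul_comp_iff_of_conj {ι : K →* G} (hι : Injective ι) {φ₁ φ₂ : L →* K}
    {c : G} (hc : (MulAut.conj c).toMonoidHom.comp (ι.comp φ₁) = ι.comp φ₂) :
    (∃ θ : X ≃ X, ∀ (l : L) (x : X), θ (φ₁ l • x) = φ₂ l • θ x) ↔
      ∀ D ≤ (ι.comp φ₁).range, Nat.card (fixedPoints (D.comap ι) X) =
        Nat.card (fixedPoints ((D.map (MulAut.conj c).toMonoidHom).comap ι) X) := by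
  have hcomap (φ : L →* K) (H : Subgroup L) : (H.map (ι.comp φ)).comap ι = H.map φ := by
    rw [← Subgroup.map_map, Subgroup.comap_map_eq_self_of_injective hι]
  have hconj (H : Subgroup L) :
      (H.map (ι.comp φ₁)).map (MulAut.conj c).toMonoidHom = H.map (ι.comp φ₂) := by
    rw [Subgroup.map_map, hc]
  rw [exists_equiv_smul_comp_iff]
  constructor
  · intro h D hD
    obtain ⟨H, rfl⟩ : ∃ H : Subgroup L, H.map (ι.comp φ₁) = D := ⟨_, Subgroup.map_comap_eq_self hD⟩
    rw [hconj, hcomap, hcomap]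
    exact h H
  · intro h H
    have := h _ (Subgroup.map_le_range _ H)
    rwa [hconj, hcomap, hcomap] at this

end Restriction

end MulAction

namespace Subgroup

variable {G₁ G₂ : Type*} [Group G₁] [Group G₂]

theorem map_conj_map_conj_prod (D : Subgroup (G₂ × G₁)) (h : G₂) (g : G₁) :
    (D.map (MulAut.conj ((1 : G₂), g)).toMonoidHom).map (MulAut.conj (h, (1 : G₁))).toMonoidHom =
      D.map (MulAut.conj (h, g)).toMonoidHom := by
  rw [map_map]
  congr 1
  ext <;> simp

theorem map_conj_one_le_prod {A : Subgroup G₂} {B : Subgroup G₁} {D : Subgroup (G₂ × G₁)}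
    (hD : D ≤ A.prod B) {c : G₂ × G₁} (hc : D.map (MulAut.conj c).toMonoidHom ≤ A.prod B) :
    D.map (MulAut.conj ((1 : G₂), c.2)).toMonoidHom ≤ A.prod B := by
  rintro _ ⟨d, hd, rfl⟩
  exact mem_prod.mpr ⟨by simpa using (mem_prod.mp (hD hd)).1,
    (mem_prod.mp (hc ⟨d, hd, rfl⟩)).2⟩

theorem forall_map_conj_prod_iff {α : Type*} (m : Subgroup (G₂ × G₁) → α) (A : Subgroup G₂)
    (B : Subgroup G₁) :
    ((∀ D ≤ A.prod B, ∀ g : G₁, D.map (MulAut.conj ((1 : G₂), g)).toMonoidHom ≤ A.prod B →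
        m D = m (D.map (MulAut.conj ((1 : G₂), g)).toMonoidHom)) ∧
      (∀ D ≤ A.prod B, ∀ h : G₂, D.map (MulAut.conj (h, (1 : G₁))).toMonoidHom ≤ A.prod B →
        m D = m (D.map (MulAut.conj (h, (1 : G₁))).toMonoidHom))) ↔
    ∀ D ≤ A.prod B, ∀ c : G₂ × G₁, D.map (MulAut.conj c).toMonoidHom ≤ A.prod B →
      m D = m (D.map (MulAut.conj c).toMonoidHom) := by
  constructor
  · rintro ⟨hsnd, hfst⟩ D hD ⟨h, g⟩ hc
    have hD' := map_conj_one_le_prod hD hc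
    rw [hsnd D hD g hD', hfst _ hD' h (by rwa [map_conj_map_conj_prod]),
      map_conj_map_conj_prod]
  · exact fun h => ⟨fun D hD c => h D hD _, fun D hD c => h D hD _⟩

end Subgroup

open MulAction

namespace Biset

variable {G₁ G₂ : Type*} [Group G₁] [Group G₂]
  (S₁ : Subgroup G₁) (S₂ : Subgroup G₂) (X : Type*) [MulAction (S₂ × S₁) X]

noncomputable def mark (D : Subgroup (G₂ × G₁)) : ℕ :=
  Nat.card {x : X | ∀ s : S₂ × S₁, ((s.1 : G₂), (s.2 : G₁)) ∈ D → s • x = x}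

def IsRightStable : Prop :=
  ∀ (P : Subgroup G₁) (hP : P ≤ S₁) (g : G₁) (hg : ∀ u ∈ P, g * u * g⁻¹ ∈ S₁),
    ∃ θ : X ≃ X, ∀ (a : S₂) (u : G₁) (hu : u ∈ P) (x : X),
      θ ((a, (⟨u, hP hu⟩ : S₁)) • x) = (a, (⟨g * u * g⁻¹, hg u hu⟩ : S₁)) • θ x

def IsLeftStable : Prop :=
  ∀ (P : Subgroup G₂) (hP : P ≤ S₂) (h : G₂) (hh : ∀ u ∈ P, h * u * h⁻¹ ∈ S₂),
    ∃ η : X ≃ X, ∀ (u : G₂) (hu : u ∈ P) (b : S₁) (x : X),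
      η (((⟨u, hP hu⟩ : S₂), b) • x) = ((⟨h * u * h⁻¹, hh u hu⟩ : S₂), b) • η x

variable {S₁ S₂ X}

theorem mark_eq_card_fixedPoints (D : Subgroup (G₂ × G₁)) :
    mark S₁ S₂ X D = Nat.card (fixedPoints (D.comap (S₂.subtype.prodMap S₁.subtype)) X) := by
  unfold mark
  congr
  ext x
  simp

variable [Finite X]

theorem exists_equiv_conj_snd_iff {P : Subgroup G₁} (hP : P ≤ S₁) {g : G₁}
    (hg : ∀ u ∈ P, g * u * g⁻¹ ∈ S₁) :
    (∃ θ : X ≃ X, ∀ (a : S₂) (u : G₁) (hu : u ∈ P) (x : X),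
      θ ((a, (⟨u, hP hu⟩ : S₁)) • x) = (a, (⟨g * u * g⁻¹, hg u hu⟩ : S₁)) • θ x) ↔
    ∀ D ≤ S₂.prod P,
      mark S₁ S₂ X D = mark S₁ S₂ X (D.map (MulAut.conj ((1 : G₂), g)).toMonoidHom) := by
  let j : P →* S₁ :=
    ((MulAut.conj g).toMonoidHom.comp P.subtype).codRestrict S₁ fun u => hg u u.2
  have h := exists_equiv_smul_comp_iff_of_conj (X := X) (ι := S₂.subtype.prodMap S₁.subtype)
    (Subtype.val_injective.prodMap Subtype.val_injective)
    (φ₁ := (MonoidHom.id S₂).prodMap (Subgroup.inclusion hP))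
    (φ₂ := (MonoidHom.id S₂).prodMap j) (c := ((1 : G₂), g)) (by ext <;> simp [j])
  have hrange : ((S₂.subtype.prodMap S₁.subtype).comp
      ((MonoidHom.id S₂).prodMap (Subgroup.inclusion hP))).range = S₂.prod P := by
    ext ⟨a, u⟩
    simp [Subgroup.mem_prod]
  rw [hrange] at h
  simp only [mark_eq_card_fixedPoints, ← h, Prod.forall, Subtype.forall]
  rfl

theorem exists_equiv_conj_fst_iff {P : Subgroup G₂} (hP : P ≤ S₂) {h : G₂}
    (hh : ∀ u ∈ P, h * u * h⁻¹ ∈ S₂) :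
    (∃ η : X ≃ X, ∀ (u : G₂) (hu : u ∈ P) (b : S₁) (x : X),
      η (((⟨u, hP hu⟩ : S₂), b) • x) = ((⟨h * u * h⁻¹, hh u hu⟩ : S₂), b) • η x) ↔
    ∀ D ≤ P.prod S₁,
      mark S₁ S₂ X D = mark S₁ S₂ X (D.map (MulAut.conj (h, (1 : G₁))).toMonoidHom) := by
  let j : P →* S₂ :=
    ((MulAut.conj h).toMonoidHom.comp P.subtype).codRestrict S₂ fun u => hh u u.2
  have key := exists_equiv_smul_comp_iff_of_conj (X := X) (ι := S₂.subtype.prodMap S₁.subtype)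
    (Subtype.val_injective.prodMap Subtype.val_injective)
    (φ₁ := (Subgroup.inclusion hP).prodMap (MonoidHom.id S₁))
    (φ₂ := j.prodMap (MonoidHom.id S₁)) (c := (h, (1 : G₁))) (by ext <;> simp [j])
  have hrange : ((S₂.subtype.prodMap S₁.subtype).comp
      ((Subgroup.inclusion hP).prodMap (MonoidHom.id S₁))).range = P.prod S₁ := by
    ext ⟨u, b⟩
    simp [Subgroup.mem_prod]
  rw [hrange] at key
  simp only [mark_eq_card_fixedPoints, ← key, Prod.forall, Subtype.forall]
  rfl

theorem isRightStable_iff : IsRightStable S₁ S₂ X ↔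
    ∀ D ≤ S₂.prod S₁, ∀ g : G₁, D.map (MulAut.conj ((1 : G₂), g)).toMonoidHom ≤ S₂.prod S₁ →
      mark S₁ S₂ X D = mark S₁ S₂ X (D.map (MulAut.conj ((1 : G₂), g)).toMonoidHom) := by
  constructor
  · intro hX D hD g hDg
    obtain ⟨hD₂, hD₁⟩ := Subgroup.le_prod_iff.mp hD
    have hg : ∀ u ∈ D.map (MonoidHom.snd G₂ G₁), g * u * g⁻¹ ∈ S₁ := by
      rintro _ ⟨d, hd, rfl⟩
      exact (Subgroup.mem_prod.mp (hDg ⟨d, hd, rfl⟩)).2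
    exact (exists_equiv_conj_snd_iff hD₁ hg).mp (hX _ hD₁ g hg) D
      (Subgroup.le_prod_iff.mpr ⟨hD₂, le_rfl⟩)
  · intro h P hP g hg
    refine (exists_equiv_conj_snd_iff hP hg).mpr fun D hD =>
      h D (hD.trans (Subgroup.prod_mono le_rfl hP)) g ?_
    rintro _ ⟨d, hd, rfl⟩
    obtain ⟨hd₂, hd₁⟩ := Subgroup.mem_prod.mp (hD hd)
    exact Subgroup.mem_prod.mpr ⟨by simpa using hd₂, hg _ hd₁⟩

theorem isLeftStable_iff : IsLeftStable S₁ S₂ X ↔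
    ∀ D ≤ S₂.prod S₁, ∀ h : G₂, D.map (MulAut.conj (h, (1 : G₁))).toMonoidHom ≤ S₂.prod S₁ →
      mark S₁ S₂ X D = mark S₁ S₂ X (D.map (MulAut.conj (h, (1 : G₁))).toMonoidHom) := by
  constructor
  · intro hX D hD h hDh
    obtain ⟨hD₂, hD₁⟩ := Subgroup.le_prod_iff.mp hD
    have hh : ∀ u ∈ D.map (MonoidHom.fst G₂ G₁), h * u * h⁻¹ ∈ S₂ := by
      rintro _ ⟨d, hd, rfl⟩
      exact (Subgroup.mem_prod.mp (hDh ⟨d, hd, rfl⟩)).1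
    exact (exists_equiv_conj_fst_iff hD₂ hh).mp (hX _ hD₂ h hh) D
      (Subgroup.le_prod_iff.mpr ⟨le_rfl, hD₁⟩)
  · intro hm P hP h hh
    refine (exists_equiv_conj_fst_iff hP hh).mpr fun D hD =>
      hm D (hD.trans (Subgroup.prod_mono hP le_rfl)) h ?_
    rintro _ ⟨d, hd, rfl⟩
    obtain ⟨hd₂, hd₁⟩ := Subgroup.mem_prod.mp (hD hd)
    exact Subgroup.mem_prod.mpr ⟨hh _ hd₂, by simpa using hd₁⟩

end Biset

open Biset

theorem stmt10_general (p : ℕ)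
    (G₁ G₂ : Type*) [Group G₁] [Group G₂]
    (S₁ : Sylow p G₁) (S₂ : Sylow p G₂)
    (X : Type) [Fintype X]
    [MulAction (↥(S₂ : Subgroup G₂) × ↥(S₁ : Subgroup G₁)) X] :
    ((∀ (P : Subgroup G₁) (hP : P ≤ ↑S₁) (g : G₁)
        (hg : ∀ u ∈ P, g * u * g⁻¹ ∈ (S₁ : Subgroup G₁)),
        ∃ θ : X ≃ X, ∀ (a : ↥(S₂ : Subgroup G₂)) (u : G₁) (hu : u ∈ P) (x : X),
          θ ((a, (⟨u, hP hu⟩ : ↥(S₁ : Subgroup G₁))) • x) =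
            (a, (⟨g * u * g⁻¹, hg u hu⟩ : ↥(S₁ : Subgroup G₁))) • θ x) ∧
      (∀ (P : Subgroup G₂) (hP : P ≤ ↑S₂) (h : G₂)
        (hh : ∀ u ∈ P, h * u * h⁻¹ ∈ (S₂ : Subgroup G₂)),
        ∃ η : X ≃ X, ∀ (u : G₂) (hu : u ∈ P) (b : ↥(S₁ : Subgroup G₁)) (x : X),
          η (((⟨u, hP hu⟩ : ↥(S₂ : Subgroup G₂)), b) • x) =
            ((⟨h * u * h⁻¹, hh u hu⟩ : ↥(S₂ : Subgroup G₂)), b) • η x)) ↔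
    (∀ D : Subgroup (G₂ × G₁), D ≤ (S₂ : Subgroup G₂).prod (S₁ : Subgroup G₁) →
      ∀ hg : G₂ × G₁,
        Subgroup.map (MulAut.conj hg).toMonoidHom D ≤
          (S₂ : Subgroup G₂).prod (S₁ : Subgroup G₁) →
        Nat.card ↥{x : X | ∀ s : ↥(S₂ : Subgroup G₂) × ↥(S₁ : Subgroup G₁),
            ((s.1 : G₂), (s.2 : G₁)) ∈ D → s • x = x} =
          Nat.card ↥{x : X | ∀ s : ↥(S₂ : Subgroup G₂) × ↥(S₁ : Subgroup G₁),
            ((s.1 : G₂), (s.2 : G₁)) ∈ Subgroup.map (MulAut.conj hg).toMonoidHom D →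
              s • x = x}) := by
  exact (and_congr isRightStable_iff isLeftStable_iff).trans
    (Subgroup.forall_map_conj_prod_iff (mark S₁.toSubgroup S₂.toSubgroup X) _ _)

theorem stmt10 (p : ℕ) [Fact p.Prime]
    (G₁ G₂ : Type*) [Group G₁] [Group G₂] [Fintype G₁] [Fintype G₂]
    (S₁ : Sylow p G₁) (S₂ : Sylow p G₂)
    (X : Type) [Fintype X]
    [MulAction (↥(S₂ : Subgroup G₂) × ↥(S₁ : Subgroup G₁)) X] :
    ((∀ (P : Subgroup G₁) (hP : P ≤ ↑S₁) (g : G₁)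
        (hg : ∀ u ∈ P, g * u * g⁻¹ ∈ (S₁ : Subgroup G₁)),
        ∃ θ : X ≃ X, ∀ (a : ↥(S₂ : Subgroup G₂)) (u : G₁) (hu : u ∈ P) (x : X),
          θ ((a, (⟨u, hP hu⟩ : ↥(S₁ : Subgroup G₁))) • x) =
            (a, (⟨g * u * g⁻¹, hg u hu⟩ : ↥(S₁ : Subgroup G₁))) • θ x) ∧
      (∀ (P : Subgroup G₂) (hP : P ≤ ↑S₂) (h : G₂)
        (hh : ∀ u ∈ P, h * u * h⁻¹ ∈ (S₂ : Subgroup G₂)),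
        ∃ η : X ≃ X, ∀ (u : G₂) (hu : u ∈ P) (b : ↥(S₁ : Subgroup G₁)) (x : X),
          η (((⟨u, hP hu⟩ : ↥(S₂ : Subgroup G₂)), b) • x) =
            ((⟨h * u * h⁻¹, hh u hu⟩ : ↥(S₂ : Subgroup G₂)), b) • η x)) ↔
    (∀ D : Subgroup (G₂ × G₁), D ≤ (S₂ : Subgroup G₂).prod (S₁ : Subgroup G₁) →
      ∀ hg : G₂ × G₁,
        Subgroup.map (MulAut.conj hg).toMonoidHom D ≤
          (S₂ : Subgroup G₂).prod (S₁ : Subgroup G₁) →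
        Nat.card ↥{x : X | ∀ s : ↥(S₂ : Subgroup G₂) × ↥(S₁ : Subgroup G₁),
            ((s.1 : G₂), (s.2 : G₁)) ∈ D → s • x = x} =
          Nat.card ↥{x : X | ∀ s : ↥(S₂ : Subgroup G₂) × ↥(S₁ : Subgroup G₁),
            ((s.1 : G₂), (s.2 : G₁)) ∈ Subgroup.map (MulAut.conj hg).toMonoidHom D →
              s • x = x}) :=
  stmt10_general p G₁ G₂ S₁ S₂ X
end

section
/- For each subgroup P ≤ S define the function f_P from the set of subgroups of S to ℚ by f_P(Q) = (|N_G(Q,P)| · |S|) / (|P| · |N_G(Q,S)|). Then: (1) f_P = f_{P'} if and only if P and P' are G-conjugate; and (2) for any finite list P₁, …, P_k of pairwise non-G-conjugate subgroups of S, the functions f_{P₁}, …, f_{P_k} are linearly independent over ℚ. (This realizes, at the level of mark vectors, the paper's Proposition that the elements β_P, one for each F-conjugacy class of subgroups, form a basis of the p-localized Burnside ring A(F)_(p) for F = F_S(G): f_P(Q) = Φ_Q(β_P), the triangularity of the matrix (f_P(Q)) with nonzero diagonal giving independence.) -/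
/-- The mark `f_P(Q) = |N_G(Q,P)|·|S| / (|P|·|N_G(Q,S)|)` of the basis element
`β_P` at the subgroup `Q`. -/
noncomputable def fpMark {G : Type*} [Group G] (S P Q : Subgroup G) : ℚ :=
  (Nat.card ↥(transporter Q P) * Nat.card ↥S : ℚ) /
    (Nat.card ↥P * Nat.card ↥(transporter Q S))

section Helpers

variable {G : Type*} [Group G] [Fintype G]

lemma one_mem_transporter {Q P : Subgroup G} (h : Q ≤ P) : (1 : G) ∈ transporter Q P := by
  intro a ha
  simpa using h ha

lemma card_map_conj (g : G) (Q : Subgroup G) :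
    Nat.card ↥(Subgroup.map (MulAut.conj g).toMonoidHom Q) = Nat.card ↥Q :=
  (Nat.card_congr (Q.equivMapOfInjective (MulAut.conj g).toMonoidHom
    (MulAut.conj g).injective).toEquiv).symm

lemma map_conj_le_of_mem_transporter {Q P : Subgroup G} {g : G} (hg : g ∈ transporter Q P) :
    Subgroup.map (MulAut.conj g).toMonoidHom Q ≤ P := by
  intro x hx
  obtain ⟨q, hq, rfl⟩ := Subgroup.mem_map.1 hx
  simpa [MulAut.conj_apply] using hg q hq

lemma card_le_of_mem_transporter {Q P : Subgroup G} {g : G} (hg : g ∈ transporter Q P) :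
    Nat.card ↥Q ≤ Nat.card ↥P := by
  rw [← card_map_conj g Q]
  exact Subgroup.card_le_of_le (map_conj_le_of_mem_transporter hg)

lemma gconj_of_mem_transporter_card {Q P : Subgroup G} {g : G} (hg : g ∈ transporter Q P)
    (hc : Nat.card ↥P ≤ Nat.card ↥Q) : GConj Q P := by
  refine ⟨g, ?_⟩
  have hle := map_conj_le_of_mem_transporter hg
  have hcard : Nat.card ↥P ≤ Nat.card ↥(Subgroup.map (MulAut.conj g).toMonoidHom Q) := by
    rw [card_map_conj]; exact hc
  apply SetLike.coe_injective
  apply Set.eq_of_subset_of_ncard_le hle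
  rw [← Nat.card_coe_set_eq, ← Nat.card_coe_set_eq]
  exact_mod_cast hcard

lemma transporter_gconj_eq {P P' : Subgroup G} (g : G)
    (hg : Subgroup.map (MulAut.conj g).toMonoidHom P = P') (Q : Subgroup G) :
    transporter Q P' = (fun x => g * x) '' transporter Q P := by
  ext y
  constructor
  · intro hy
    refine ⟨g⁻¹ * y, ?_, by group⟩
    intro a ha
    have h1 : y * a * y⁻¹ ∈ P' := hy a ha
    rw [← hg] at h1
    obtain ⟨q, hq, hq2⟩ := Subgroup.mem_map.1 h1
    simp only [MulEquiv.coe_toMonoidHom, MulAut.conj_apply] at hq2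
    have heq : g⁻¹ * y * a * (g⁻¹ * y)⁻¹ = q := by
      calc g⁻¹ * y * a * (g⁻¹ * y)⁻¹ = g⁻¹ * (y * a * y⁻¹) * g := by group
        _ = g⁻¹ * (g * q * g⁻¹) * g := by rw [hq2]
        _ = q := by group
    show g⁻¹ * y * a * (g⁻¹ * y)⁻¹ ∈ P
    rw [heq]; exact hq
  · rintro ⟨x, hx, rfl⟩
    intro a ha
    have h1 : x * a * x⁻¹ ∈ P := hx a ha
    have h2 : g * (x * a * x⁻¹) * g⁻¹ ∈ P' := by
      rw [← hg]
      exact ⟨x * a * x⁻¹, h1, rfl⟩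
    rw [show g * x * a * (g * x)⁻¹ = g * (x * a * x⁻¹) * g⁻¹ by group]
    exact h2

lemma card_transporter_gconj {P P' : Subgroup G} (h : GConj P P') (Q : Subgroup G) :
    Nat.card ↥(transporter Q P) = Nat.card ↥(transporter Q P') := by
  obtain ⟨g, hg⟩ := h
  rw [transporter_gconj_eq g hg Q, Nat.card_coe_set_eq, Nat.card_coe_set_eq,
    Set.ncard_image_of_injective _ (mul_right_injective g)]

lemma card_gconj {P P' : Subgroup G} (h : GConj P P') : Nat.card ↥P = Nat.card ↥P' := by
  obtain ⟨g, hg⟩ := h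
  rw [← hg, card_map_conj]

lemma fpMark_eq_of_gconj {S P P' : Subgroup G} (h : GConj P P') (Q : Subgroup G) :
    fpMark S P Q = fpMark S P' Q := by
  unfold fpMark
  rw [card_transporter_gconj h Q, card_gconj h]

lemma fpMark_pos {S P Q : Subgroup G} (hQ : Q ≤ S) (hne : (transporter Q P).Nonempty) :
    0 < fpMark S P Q := by
  unfold fpMark
  apply div_pos
  · apply mul_pos
    · exact_mod_cast Nat.card_pos_iff.2 ⟨hne.to_subtype, Set.toFinite _⟩
    · exact_mod_cast Nat.card_pos (α := ↥S)
  · apply mul_pos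
    · exact_mod_cast Nat.card_pos (α := ↥P)
    · exact_mod_cast Nat.card_pos_iff.2
        ⟨⟨⟨1, one_mem_transporter hQ⟩⟩, Set.toFinite (transporter Q S)⟩

lemma transporter_nonempty_of_fpMark_ne {S P Q : Subgroup G} (h : fpMark S P Q ≠ 0) :
    (transporter Q P).Nonempty := by
  by_contra hne
  rw [Set.not_nonempty_iff_eq_empty] at hne
  apply h
  unfold fpMark
  rw [hne]
  simp

end Helpers

theorem stmt11 (p : ℕ) [Fact p.Prime] (G : Type*) [Group G] [Fintype G]
    (S : Sylow p G) :
    (∀ P P' : Subgroup G, P ≤ ↑S → P' ≤ ↑S →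
      ((∀ Q : Subgroup G, Q ≤ ↑S → fpMark ↑S P Q = fpMark ↑S P' Q) ↔ GConj P P')) ∧
    ∀ (k : ℕ) (P : Fin k → Subgroup G), (∀ i, P i ≤ ↑S) →
      (∀ i j, i ≠ j → ¬ GConj (P i) (P j)) →
      ∀ c : Fin k → ℚ,
        (∀ Q : Subgroup G, Q ≤ ↑S → ∑ i, c i * fpMark ↑S (P i) Q = 0) →
        ∀ i, c i = 0 := by
  constructor
  · intro P P' hP hP'
    constructor
    · intro h
      have h1 : fpMark (↑S) P' P ≠ 0 := by
        rw [← h P hP]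
        exact (fpMark_pos hP ⟨1, one_mem_transporter le_rfl⟩).ne'
      have h2 : fpMark (↑S) P P' ≠ 0 := by
        rw [h P' hP']
        exact (fpMark_pos hP' ⟨1, one_mem_transporter le_rfl⟩).ne'
      obtain ⟨g, hg⟩ := transporter_nonempty_of_fpMark_ne h1
      obtain ⟨g', hg'⟩ := transporter_nonempty_of_fpMark_ne h2
      exact gconj_of_mem_transporter_card hg (card_le_of_mem_transporter hg')
    · intro h Q _
      exact fpMark_eq_of_gconj h Q
  · intro k P hPle hPnc c hsum
    by_contra hc
    push_neg at hc
    obtain ⟨i₀, hi₀⟩ := hc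
    set s : Finset (Fin k) := Finset.univ.filter (fun j => c j ≠ 0) with hs
    have hsne : s.Nonempty := ⟨i₀, by simp [hs, hi₀]⟩
    obtain ⟨i, his, hmax⟩ := s.exists_max_image (fun j => Nat.card ↥(P j)) hsne
    have hci : c i ≠ 0 := (Finset.mem_filter.1 his).2
    have key : ∑ j, c j * fpMark (↑S) (P j) (P i) = 0 := hsum (P i) (hPle i)
    rw [Finset.sum_eq_single i] at key
    · have hpos : 0 < fpMark (↑S) (P i) (P i) :=
        fpMark_pos (hPle i) ⟨1, one_mem_transporter le_rfl⟩
      rcases mul_eq_zero.1 key with h | h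
      · exact hci h
      · exact absurd h hpos.ne'
    · intro j _ hji
      by_cases hcj : c j = 0
      · rw [hcj, zero_mul]
      · by_cases hne : fpMark (↑S) (P j) (P i) = 0
        · rw [hne, mul_zero]
        · exfalso
          obtain ⟨g, hg⟩ := transporter_nonempty_of_fpMark_ne hne
          have hle : Nat.card ↥(P j) ≤ Nat.card ↥(P i) :=
            hmax j (Finset.mem_filter.2 ⟨Finset.mem_univ j, hcj⟩)
          exact hPnc i j (Ne.symm hji) (gconj_of_mem_transporter_card hg hle)
    · intro h
      exact absurd (Finset.mem_univ i) h
end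

section
/- Let P ≤ S be a fully normalized subgroup and let P' ≤ S be G-conjugate to P. Let X be a finite S-set such that |X^Q| = |X^{Q'}| for all G-conjugate subgroups Q, Q' ≤ S with |Q| > |P|. Then |N_S(P')|/|P'| divides the integer |X^P| − |X^{P'}|, i.e. |X^P| ≡ |X^{P'}| modulo the order of the Weyl group N_S(P')/P'. (This is the key congruence established in the paper's stabilization Lemma: for an element that is F-stable away from the conjugacy class of P, the deviations of its marks across the F-conjugacy class of P are divisible by the relevant Weyl group orders, which makes the correction coefficients λ_{P'} p-integral.) -/
/-- The number of fixed points `|X^Q|` of an `S`-set `X` under a subgroup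
`Q` of the ambient group, where the `S`-action is given explicitly by `m`. -/
noncomputable def fixCard {H : Type*} [Group H] (S Q : Subgroup H) (X : Type)
    (m : MulAction ↥S X) : ℕ :=
  letI := m
  Nat.card ↥{x : X | ∀ s : ↥S, (s : H) ∈ Q → s • x = x}

/-!
Conjugating by a suitable `h ∈ G` reduces everything to one group `K = N_S(P')`. Full
normalization makes `N_S(P)` a Sylow subgroup of `N_G(P)`, so some `h` carries `P'` to `P` and `K`
into `N_S(P)`. Then `K` acts on `X` in two ways, by restriction and through conjugation by `h`; a
subgroup `Q ≤ K` fixes `X^Q` in the first and `X^{hQh⁻¹}` in the second, and these have the same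
size as soon as `Q > P'`. Sorting points by their exact stabilizer, downward induction over the
subgroups of `K` shows that the two `K`-sets have equally many points with stabilizer `R` for each
`R > P'`. So `|X^P| - |X^{P'}|` is the difference of the numbers of points with stabilizer exactly
`P'`, and both are sizes of free `K/P'`-sets, hence multiples of `|K : P'|`.
-/

open MulAction Pointwise

section StabilizerCounting

variable {W Y Y' : Type*} [Group W]

theorem index_dvd_card_of_forall_stabilizer_eq [MulAction W Y] [Finite Y] (H : Subgroup W)
    (h : ∀ y : Y, stabilizer W y = H) : H.index ∣ Nat.card Y := by
  have := Fintype.ofFinite (orbitRel.Quotient W Y)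
  rw [Nat.card_congr (selfEquivSigmaOrbits W Y), Nat.card_sigma]
  refine Finset.dvd_sum fun ω _ => ?_
  rw [Nat.card_congr (orbitEquivQuotientStabilizer W ω.out), h]
  rfl

theorem index_dvd_card_stabilizer_eq [MulAction W Y] [Finite Y] (N : Subgroup W) [N.Normal] :
    N.index ∣ Nat.card {y : Y // stabilizer W y = N} := by
  let Z : SubMulAction W Y :=
    { carrier := {y | stabilizer W y = N}
      smul_mem' := fun w y (hy : stabilizer W y = N) => by
        rw [Set.mem_ofPred_eq, stabilizer_smul_eq_stabilizer_map_conj, hy]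
        exact Subgroup.Normal.map_conj_eq N w }
  exact index_dvd_card_of_forall_stabilizer_eq (Y := Z) N fun z =>
    (Z.stabilizer_of_subMul z).trans z.2

def subtypeLtStabilizerEquivSigma [MulAction W Y] (Q : Subgroup W) :
    {y : Y // Q < stabilizer W y} ≃
      Σ R : {R : Subgroup W // Q < R}, {y : Y // stabilizer W y = R} where
  toFun y := ⟨⟨_, y.2⟩, y.1, rfl⟩
  invFun z := ⟨z.2.1, z.1.2.trans_eq z.2.2.symm⟩
  left_inv _ := rfl
  right_inv := by
    rintro ⟨⟨R, hR⟩, y, hy⟩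
    obtain rfl : stabilizer W y = R := hy
    rfl

theorem card_le_stabilizer_eq_card_add_card_sigma [Finite W] [MulAction W Y] [Finite Y]
    (Q : Subgroup W) :
    Nat.card {y : Y // Q ≤ stabilizer W y} =
      Nat.card {y : Y // stabilizer W y = Q} +
        Nat.card (Σ R : {R : Subgroup W // Q < R}, {y : Y // stabilizer W y = R}) := by
  classical
  rw [← Nat.card_sum]
  refine Nat.card_congr ((Equiv.subtypeEquivRight fun y => le_iff_eq_or_lt).trans ?_)
  refine (subtypeOrEquiv _ _ ?_).trans
    ((Equiv.subtypeEquivRight fun y => eq_comm).sumCongr (subtypeLtStabilizerEquivSigma Q))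
  exact fun p hp hq y hy => (hq y hy).ne (hp y hy)

theorem card_sigma_stabilizer_eq_congr [Finite W] [MulAction W Y] [MulAction W Y'] [Finite Y]
    [Finite Y'] (Q : Subgroup W)
    (h : ∀ R, Q < R →
      Nat.card {y : Y // stabilizer W y = R} = Nat.card {y : Y' // stabilizer W y = R}) :
    Nat.card (Σ R : {R : Subgroup W // Q < R}, {y : Y // stabilizer W y = R}) =
      Nat.card (Σ R : {R : Subgroup W // Q < R}, {y : Y' // stabilizer W y = R}) := by
  have := Fintype.ofFinite {R : Subgroup W // Q < R}
  rw [Nat.card_sigma, Nat.card_sigma]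
  exact Fintype.sum_congr _ _ fun R => h R R.2

theorem card_stabilizer_eq_eq_of_forall_le [Finite W] [MulAction W Y] [MulAction W Y']
    [Finite Y] [Finite Y'] (Q : Subgroup W)
    (h : ∀ R, Q ≤ R →
      Nat.card {y : Y // R ≤ stabilizer W y} = Nat.card {y : Y' // R ≤ stabilizer W y}) :
    Nat.card {y : Y // stabilizer W y = Q} = Nat.card {y : Y' // stabilizer W y = Q} := by
  induction Q using WellFoundedGT.induction with
  | _ Q ih =>
  have hQ := h Q le_rfl
  rw [card_le_stabilizer_eq_card_add_card_sigma, card_le_stabilizer_eq_card_add_card_sigma,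
    card_sigma_stabilizer_eq_congr Q fun R hR => ih R hR fun T hT => h T (hR.le.trans hT)] at hQ
  exact Nat.add_right_cancel hQ

-- The actions are named so that `Y` and `Y'` may be one type carrying two different actions.
theorem index_dvd_card_le_stabilizer_sub [Finite W] [mY : MulAction W Y] [mY' : MulAction W Y']
    [Finite Y] [Finite Y'] (N : Subgroup W) [N.Normal]
    (h : ∀ Q, N < Q →
      Nat.card {y : Y // Q ≤ stabilizer W y} = Nat.card {y : Y' // Q ≤ stabilizer W y}) :
    (N.index : ℤ) ∣
      (Nat.card {y : Y // N ≤ stabilizer W y} : ℤ) - Nat.card {y : Y' // N ≤ stabilizer W y} := by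
  rw [card_le_stabilizer_eq_card_add_card_sigma, card_le_stabilizer_eq_card_add_card_sigma,
    card_sigma_stabilizer_eq_congr N fun R hR =>
      card_stabilizer_eq_eq_of_forall_le R fun T hT => h T (hR.trans_le hT),
    Nat.cast_add, Nat.cast_add, add_sub_add_right_eq_sub]
  exact dvd_sub (Int.natCast_dvd_natCast.2 (index_dvd_card_stabilizer_eq N))
    (Int.natCast_dvd_natCast.2 (index_dvd_card_stabilizer_eq N))

end StabilizerCounting

section FixCard

variable {G W : Type*} [Group G] [Group W]

theorem fixCard_eq_card_subgroupOf_le_stabilizer (S Q : Subgroup G) (X : Type)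
    [m : MulAction S X] :
    fixCard S Q X m = Nat.card {x : X // Q.subgroupOf S ≤ stabilizer S x} :=
  Nat.card_congr <|
    Equiv.subtypeEquivRight fun _ => ⟨fun hx s hs => hx s hs, fun hx _ hs => hx hs⟩

theorem card_le_stabilizer_eq_fixCard {X : Type} (S : Subgroup G) [m : MulAction S X]
    [mW : MulAction W X] (ψ : W →* G) (hψ : ∀ w, ψ w ∈ S)
    (hsmul : ∀ (w : W) (x : X), w • x = ψ.codRestrict S hψ w • x) (Q : Subgroup W) :
    Nat.card {x : X // Q ≤ stabilizer W x} = fixCard S (Q.map ψ) X m := by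
  have hmap : (Q.map ψ).subgroupOf S = Q.map (ψ.codRestrict S hψ) := by
    rw [← Subgroup.comap_map_eq_self_of_injective S.subtype_injective (Q.map _), Subgroup.map_map]
    rfl
  rw [fixCard_eq_card_subgroupOf_le_stabilizer, hmap]
  refine Nat.card_congr (Equiv.subtypeEquivRight fun x => ?_)
  rw [Subgroup.map_le_iff_le_comap]
  exact forall_congr' fun w => imp_congr_right fun _ => by simp [hsmul]

theorem index_dvd_fixCard_sub_fixCard [Finite W] {X : Type} [Finite X] (S : Subgroup G)
    [m : MulAction S X] (ψ ψ' : W →* G) (hψ : ∀ w, ψ w ∈ S) (hψ' : ∀ w, ψ' w ∈ S)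
    (N : Subgroup W) [N.Normal]
    (h : ∀ Q, N < Q → fixCard S (Q.map ψ) X m = fixCard S (Q.map ψ') X m) :
    (N.index : ℤ) ∣ (fixCard S (N.map ψ) X m : ℤ) - fixCard S (N.map ψ') X m := by
  let a := compHom X (ψ.codRestrict S hψ)
  let a' := compHom X (ψ'.codRestrict S hψ')
  have e := card_le_stabilizer_eq_fixCard (mW := a) S ψ hψ fun _ _ => rfl
  have e' := card_le_stabilizer_eq_fixCard (mW := a') S ψ' hψ' fun _ _ => rfl
  rw [← e, ← e']
  exact index_dvd_card_le_stabilizer_sub (mY := a) (mY' := a') N fun Q hQ => by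
    rw [e, e']
    exact h Q hQ

end FixCard

section Sylow

variable {G : Type*} [Group G]

theorem conj_smul_normalizer (g : G) (H : Subgroup G) :
    MulAut.conj g • Subgroup.normalizer (H : Set G) =
      Subgroup.normalizer ((MulAut.conj g • H : Subgroup G) : Set G) :=
  Subgroup.map_equiv_normalizer_eq H (MulAut.conj g)

variable [Finite G] {p : ℕ} [Fact p.Prime]

theorem exists_conj_smul_le_of_isPGroup {H B A : Subgroup G} (hB : IsPGroup p B) (hBH : B ≤ H)
    (hBmax : ∀ T : Subgroup G, IsPGroup p T → B ≤ T → T ≤ H → Nat.card T ≤ Nat.card B)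
    (hA : IsPGroup p A) (hAH : A ≤ H) : ∃ n ∈ H, MulAut.conj n • A ≤ B := by
  obtain ⟨T, hBT⟩ : ∃ T : Sylow p H, B.subgroupOf H ≤ T :=
    (hB.comap_subtype (K := H)).exists_le_sylow
  have hTB : (T : Subgroup H).map H.subtype = B := by
    have hBT' : B ≤ (T : Subgroup H).map H.subtype := by
      have := Subgroup.map_mono (f := H.subtype) hBT
      rwa [Subgroup.subgroupOf_map_subtype, inf_eq_left.2 hBH] at this
    exact (Subgroup.eq_of_le_of_card_ge hBT'
      (hBmax _ (T.2.map _) hBT' (Subgroup.map_subtype_le _))).symm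
  obtain ⟨T₁, hAT₁⟩ : ∃ T₁ : Sylow p H, A.subgroupOf H ≤ T₁ :=
    (hA.comap_subtype (K := H)).exists_le_sylow
  obtain ⟨n, rfl⟩ := MulAction.exists_smul_eq H T T₁
  refine ⟨(n⁻¹ : H), (n⁻¹ : H).2, ?_⟩
  rw [Sylow.coe_subgroup_smul, Subgroup.subset_pointwise_smul_iff, ← map_inv,
    Subgroup.conj_smul_subgroupOf hAH] at hAT₁
  rw [← hTB]
  have := Subgroup.map_mono (f := H.subtype) hAT₁
  rwa [Subgroup.subgroupOf_map_subtype, inf_eq_left.2 (Subgroup.conj_smul_le_of_le hAH _)] at this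

theorem FullyNormalized.card_le_card_normIn (S : Sylow p G) {P T : Subgroup G} (hP : P ≤ S)
    (hfn : FullyNormalized S P) (hT : IsPGroup p T) (hle : normIn S P ≤ T)
    (hTN : T ≤ Subgroup.normalizer (P : Set G)) : Nat.card T ≤ Nat.card (normIn S P) := by
  obtain ⟨S₁, hTS₁⟩ := hT.exists_le_sylow
  obtain ⟨c, hc⟩ := MulAction.exists_smul_eq G S₁ S
  have hcS : MulAut.conj c • (S₁ : Subgroup G) = S := by rw [← Sylow.coe_subgroup_smul, hc]
  have hTS : MulAut.conj c • T ≤ S :=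
    hcS ▸ Subgroup.pointwise_smul_le_pointwise_smul_iff.2 hTS₁
  have hPT : P ≤ T := (le_inf Subgroup.le_normalizer hP).trans hle
  have hcT : MulAut.conj c • T ≤ normIn S (MulAut.conj c • P) :=
    le_inf ((conj_smul_normalizer c P) ▸ Subgroup.pointwise_smul_le_pointwise_smul_iff.2 hTN) hTS
  calc Nat.card T = Nat.card (MulAut.conj c • T : Subgroup G) :=
        (Subgroup.card_map_of_injective (MulAut.conj c).injective).symm
    _ ≤ Nat.card (normIn S (MulAut.conj c • P)) := Subgroup.card_le_of_le hcT
    _ ≤ Nat.card (normIn S P) :=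
        hfn _ ((Subgroup.pointwise_smul_le_pointwise_smul_iff.2 hPT).trans hTS) ⟨c, rfl⟩

theorem FullyNormalized.exists_conj_smul_eq_and_le (S : Sylow p G) {P P' : Subgroup G}
    (hP : P ≤ S) (hfn : FullyNormalized S P) (hconj : GConj P P') :
    ∃ h : G, MulAut.conj h • P' = P ∧ MulAut.conj h • normIn S P' ≤ normIn S P := by
  obtain ⟨g, rfl⟩ := hconj
  change ∃ h : G, MulAut.conj h • MulAut.conj g • P = P ∧
    MulAut.conj h • normIn S (MulAut.conj g • P) ≤ normIn S P
  have hA : MulAut.conj g⁻¹ • normIn S (MulAut.conj g • P) ≤ Subgroup.normalizer (P : Set G) := by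
    rw [Subgroup.pointwise_smul_subset_iff, ← map_inv, inv_inv, conj_smul_normalizer]
    exact inf_le_left
  obtain ⟨n, hn, hnA⟩ := exists_conj_smul_le_of_isPGroup (S.2.to_le inf_le_right) inf_le_left
    (fun T hT hle hTN => hfn.card_le_card_normIn S hP hT hle hTN)
    ((S.2.to_le inf_le_right).map _) hA
  refine ⟨n * g⁻¹, ?_, by rwa [map_mul, mul_smul]⟩
  rw [map_mul, mul_smul, map_inv, inv_smul_smul]
  exact Subgroup.mem_normalizer_iff_map_conj_eq.1 hn

end Sylow

theorem stmt12 (p : ℕ) [Fact p.Prime] (G : Type*) [Group G] [Fintype G]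
    (S : Sylow p G) (P P' : Subgroup G) (hP : P ≤ ↑S) (hP' : P' ≤ ↑S)
    (hfn : FullyNormalized ↑S P) (hconj : GConj P P')
    (X : Type) (fX : Fintype X) (mX : MulAction ↥(S : Subgroup G) X)
    (hstab : ∀ Q Q' : Subgroup G, Q ≤ ↑S → Q' ≤ ↑S → GConj Q Q' →
      Nat.card ↥P < Nat.card ↥Q → fixCard ↑S Q X mX = fixCard ↑S Q' X mX) :
    (Nat.card ↥(normIn ↑S P') : ℤ) ∣
      ((fixCard ↑S P X mX : ℤ) - (fixCard ↑S P' X mX : ℤ)) * Nat.card ↥P' := by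
  obtain ⟨h, hPh, hKh⟩ := hfn.exists_conj_smul_eq_and_le S hP hconj
  set K := normIn ↑S P'
  have hP'K : P' ≤ K := le_inf Subgroup.le_normalizer hP'
  have : (P'.subgroupOf K).Normal := Subgroup.normal_subgroupOf_of_le_normalizer inf_le_left
  have := fX
  let ψ : K →* G := (MulAut.conj h).toMonoidHom.comp K.subtype
  have hψ (Q : Subgroup K) : Q.map ψ = MulAut.conj h • Q.map K.subtype := (Subgroup.map_map ..).symm
  have hN : (P'.subgroupOf K).map K.subtype = P' := by
    rw [Subgroup.subgroupOf_map_subtype, inf_eq_left.2 hP'K]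
  have hcardP : Nat.card P = Nat.card P' :=
    hPh ▸ Subgroup.card_map_of_injective (MulAut.conj h).injective
  have hfix (Q : Subgroup K) (hQ : P'.subgroupOf K < Q) :
      fixCard S (Q.map ψ) X mX = fixCard S (Q.map K.subtype) X mX := by
    have hP'Q : P' < Q.map K.subtype := hN ▸ Subgroup.map_subtype_lt_map_subtype.2 hQ
    have hQS : Q.map K.subtype ≤ S := (Subgroup.map_subtype_le Q).trans inf_le_right
    rw [hψ]
    refine (hstab _ _ hQS ((Subgroup.pointwise_smul_le_pointwise_smul_iff.2
      (Subgroup.map_subtype_le Q)).trans (hKh.trans inf_le_right)) ⟨h, rfl⟩ ?_).symm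
    exact hcardP ▸ lt_of_not_ge fun hle => hP'Q.ne (Subgroup.eq_of_le_of_card_ge hP'Q.le hle)
  have hweyl := index_dvd_fixCard_sub_fixCard S ψ K.subtype (fun w => (hKh ⟨w, w.2, rfl⟩).2)
    (fun w => w.2.2) _ hfix
  rw [hψ, hN, hPh] at hweyl
  have hcard := Subgroup.relIndex_mul_relIndex ⊥ P' K bot_le hP'K
  rw [Subgroup.relIndex_bot_left, Subgroup.relIndex_bot_left] at hcard
  rw [← hcard, Nat.cast_mul, mul_comm (Nat.card P' : ℤ)]
  exact mul_dvd_mul_right hweyl _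
end
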